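/- arXiv:2507.18601 — 8 statements merged into one kernel-verified Lean document; each statement's English description precedes it below -/
import Mathlib

section
/- Let s ≥ 1 and let λ = (λ_1 ≥ … ≥ λ_r) be a partition of s with r parts. Let π_λ be the set partition of {1,…,s} whose blocks are the consecutive intervals {λ_1+…+λ_{i−1}+1, …, λ_1+…+λ_i} for i = 1,…,r, and for m ≥ 1 let Disj(π_λ, m) be the number of set partitions η of {1,…,s} with exactly m blocks satisfying π_λ ∧ η = 0̂. Then, as an identity of polynomials in x (equivalently, for every real number x): (x)_{λ_1}(x)_{λ_2}⋯(x)_{λ_r} = Σ_{m=1}^{s} Disj(π_λ, m)·(x)_m. -/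
/-!
For `x = n ∈ ℕ` both sides count the maps `g : Fin s → Fin n` that are injective on every
block of `π_λ`. Block by block there are `∏ (n)_{λ_i}` of them. Grouped instead by the kernel
`η` of `g`, which is exactly a partition with `η ∧ π_λ = 0̂`, there are `(n)_{|η|}` maps with
kernel `η` (embeddings of the blocks of `η` into `Fin n`). Polynomials that agree on `ℕ` agree.
-/

open Finset Polynomial

/-- `disjCount π m` is the number of set partitions (encoded as setoids) of `Fin s`
having exactly `m` blocks and whose meet with `π` is the partition into singletons. -/
noncomputable def disjCount {s : ℕ} (π : Setoid (Fin s)) (m : ℕ) : ℕ :=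
  Nat.card {η : Setoid (Fin s) // η ⊓ π = ⊥ ∧ Nat.card (Quotient η) = m}

theorem Nat.card_embedding_eq {α β : Type*} [Finite α] [Finite β] :
    Nat.card (α ↪ β) = (Nat.card β).descFactorial (Nat.card α) := by
  have := Fintype.ofFinite α
  have := Fintype.ofFinite β
  simp only [Nat.card_eq_fintype_card, Fintype.card_embedding_eq]

theorem Polynomial.eq_of_eval_natCast_eq {R : Type*} [CommRing R] [IsDomain R] [CharZero R]
    {p q : R[X]} (h : ∀ n : ℕ, p.eval (n : R) = q.eval (n : R)) : p = q :=
  eq_of_infinite_eval_eq p q <| (Set.infinite_range_of_injective Nat.cast_injective).mono <| by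
    rintro _ ⟨n, rfl⟩
    exact h n

namespace Setoid

variable {α β ι : Type*}

instance [Finite α] : Finite (Setoid α) :=
  Finite.of_injective (fun η : Setoid α => ⇑η) fun _ _ h =>
    Setoid.ext fun a b => iff_of_eq (congrFun₂ h a b)

theorem inf_eq_bot_iff {η π : Setoid α} : η ⊓ π = ⊥ ↔ ∀ a b, η a b → π a b → a = b := by
  rw [eq_bot_iff, Setoid.le_def]
  exact ⟨fun h a b h₁ h₂ => h ⟨h₁, h₂⟩, fun h a b hab => h a b hab.1 hab.2⟩

theorem ker_inf_ker_eq_bot_iff {g : α → β} {f : α → ι} :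
    ker g ⊓ ker f = ⊥ ↔ ∀ i, Function.Injective fun a : {a // f a = i} => g a := by
  rw [inf_eq_bot_iff]
  refine ⟨fun h i a b hab => Subtype.ext (h a b hab (a.2.trans b.2.symm)), fun h a b hg hf => ?_⟩
  exact congrArg Subtype.val (h (f b) (a₁ := ⟨a, hf⟩) (a₂ := ⟨b, rfl⟩) hg)

def fiberwiseInjectiveEquiv (f : α → ι) :
    {g : α → β // ∀ i, Function.Injective fun a : {a // f a = i} => g a} ≃
      ∀ i, ({a // f a = i} ↪ β) :=
  (((Equiv.arrowCongr (Equiv.sigmaFiberEquiv f).symm (Equiv.refl β)).trans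
    (Equiv.piCurry fun i (_ : {a // f a = i}) => β)).subtypeEquiv
      (q := fun F => ∀ i, Function.Injective (F i)) fun _ => Iff.rfl).trans <|
    Equiv.subtypePiEquivPi.trans <|
      Equiv.piCongrRight fun _ => Equiv.subtypeInjectiveEquivEmbedding _ _

theorem card_ker_inf_ker_eq_bot [Finite α] [Finite β] [Fintype ι] (f : α → ι) :
    Nat.card {g : α → β // ker g ⊓ ker f = ⊥} =
      ∏ i, (Nat.card β).descFactorial (Nat.card {a // f a = i}) := by
  rw [Nat.card_congr ((Equiv.subtypeEquivRight fun _ => ker_inf_ker_eq_bot_iff).trans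
    (fiberwiseInjectiveEquiv f)), Nat.card_pi]
  simp only [Nat.card_embedding_eq]

def kerEqEquivEmbedding (η : Setoid α) : {g : α → β // ker g = η} ≃ (Quotient η ↪ β) where
  toFun g := ⟨Quotient.lift g.1 fun a b h => by rwa [← g.2] at h, fun p q =>
    Quotient.inductionOn₂ p q fun a b h => Quotient.sound (by rw [← g.2]; exact h)⟩
  invFun e := ⟨e ∘ Quotient.mk η, Setoid.ext fun a b => by simp [ker_def, Quotient.eq]⟩
  left_inv _ := rfl
  right_inv e := by
    ext q
    induction q using Quotient.inductionOn
    rfl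

theorem card_ker_eq [Finite α] [Finite β] (η : Setoid α) :
    Nat.card {g : α → β // ker g = η} = (Nat.card β).descFactorial (Nat.card (Quotient η)) := by
  rw [Nat.card_congr (kerEqEquivEmbedding η), Nat.card_embedding_eq]

theorem card_quotient_mem_Icc [Finite α] [Nonempty α] (η : Setoid α) :
    Nat.card (Quotient η) ∈ Icc 1 (Nat.card α) := by
  have : Nonempty (Quotient η) := ⟨Quotient.mk η (Classical.arbitrary α)⟩
  exact mem_Icc.2 ⟨Nat.card_pos, Nat.card_le_card_of_surjective _ Quotient.mk_surjective⟩

theorem card_ker_inf_eq_bot [Finite α] [Nonempty α] [Finite β] (π : Setoid α) :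
    Nat.card {g : α → β // ker g ⊓ π = ⊥} =
      ∑ m ∈ Icc 1 (Nat.card α),
        Nat.card {η : Setoid α // η ⊓ π = ⊥ ∧ Nat.card (Quotient η) = m} *
          (Nat.card β).descFactorial m := by
  classical
  have := Fintype.ofFinite {η : Setoid α // η ⊓ π = ⊥}
  rw [Nat.card_congr (Equiv.sigmaSubtypeFiberEquivSubtype ker
    (p := fun g : α → β => ker g ⊓ π = ⊥) (q := (· ⊓ π = ⊥)) fun _ => Iff.rfl).symm,
    Nat.card_sigma]
  simp only [card_ker_eq]
  rw [← sum_fiberwise_of_maps_to (g := fun η => Nat.card (Quotient η.1))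
    fun η _ => card_quotient_mem_Icc η.1]
  refine sum_congr rfl fun m _ => ?_
  rw [sum_congr rfl fun η hη => by rw [(mem_filter.1 hη).2], sum_const, smul_eq_mul,
    ← Fintype.card_subtype, ← Nat.card_eq_fintype_card]
  exact congrArg (· * _) (Nat.card_congr (Equiv.subtypeSubtypeEquivSubtypeInter
    (· ⊓ π = ⊥) fun η => Nat.card (Quotient η) = m))

end Setoid

theorem card_fiber_eq_of_mem_interval {s r : ℕ} {lam : Fin r → ℕ} (hsum : ∑ i, lam i = s)
    {f : Fin s → Fin r}
    (hf : ∀ a : Fin s, (∑ j ∈ Iio (f a), lam j) ≤ (a : ℕ) ∧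
        (a : ℕ) < (∑ j ∈ Iio (f a), lam j) + lam (f a)) (i : Fin r) :
    Nat.card {a // f a = i} = lam i := by
  classical
  have hle : ∀ j, #{a | f a = j} ≤ lam j := fun j => calc
    #{a | f a = j} ≤ #(Ico (∑ k ∈ Iio j, lam k) (∑ k ∈ Iio j, lam k + lam j)) :=
      card_le_card_of_injOn Fin.val (fun a ha => by
        have := hf a
        rw [(mem_filter.1 ha).2] at this
        simpa using this) Fin.val_injective.injOn
    _ = lam j := by simp
  have htot : ∑ j, #{a | f a = j} = ∑ j, lam j := by
    rw [hsum, ← card_eq_sum_card_fiberwise fun a _ => mem_univ (f a), card_univ, Fintype.card_fin]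
  rw [Nat.card_eq_fintype_card, Fintype.card_subtype]
  exact (sum_eq_sum_iff_of_le fun j _ => hle j).1 htot i (mem_univ i)

theorem stmt0_general (s r : ℕ) (hs : 1 ≤ s) (lam : Fin r → ℕ)
    (hsum : ∑ i, lam i = s)
    (f : Fin s → Fin r)
    (hf : ∀ a : Fin s, (∑ j ∈ Finset.Iio (f a), lam j) ≤ (a : ℕ) ∧
        (a : ℕ) < (∑ j ∈ Finset.Iio (f a), lam j) + lam (f a))
    (x : ℝ) :
    (∏ i, (descPochhammer ℝ (lam i)).eval x) =
      ∑ m ∈ Finset.Icc 1 s, (disjCount (Setoid.ker f) m : ℝ) * (descPochhammer ℝ m).eval x := by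
  have : Nonempty (Fin s) := ⟨⟨0, hs⟩⟩
  have hcount (n : ℕ) : ∏ i, n.descFactorial (lam i) =
      ∑ m ∈ Icc 1 s, disjCount (Setoid.ker f) m * n.descFactorial m := by
    have hprod := Setoid.card_ker_inf_ker_eq_bot (β := Fin n) f
    have hgroup := Setoid.card_ker_inf_eq_bot (β := Fin n) (Setoid.ker f)
    simp only [Nat.card_fin, card_fiber_eq_of_mem_interval hsum hf] at hprod hgroup
    rw [← hprod, hgroup]
    rfl
  have hpoly : ∏ i, descPochhammer ℝ (lam i) =
      ∑ m ∈ Icc 1 s, C (disjCount (Setoid.ker f) m : ℝ) * descPochhammer ℝ m :=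
    eq_of_eval_natCast_eq fun n => by
      simp only [eval_prod, eval_finsetSum, eval_mul, eval_C, descPochhammer_eval_eq_descFactorial]
      exact_mod_cast hcount n
  simpa [eval_prod, eval_finsetSum] using congrArg (eval x) hpoly

/-- Lemma (falling factorial version): `(x)_{λ₁} ⋯ (x)_{λ_r} = Σ_m Disj(π_λ, m) (x)_m`,
where `π_λ` is the set partition of `{1,…,s}` into consecutive intervals of lengths
`λ₁, …, λ_r` (encoded as the kernel of the function `f` sending a position to the
index of the interval containing it). -/
theorem stmt0 (s r : ℕ) (hs : 1 ≤ s) (lam : Fin r → ℕ)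
    (hpos : ∀ i, 1 ≤ lam i) (hanti : Antitone lam) (hsum : ∑ i, lam i = s)
    (f : Fin s → Fin r)
    (hf : ∀ a : Fin s, (∑ j ∈ Finset.Iio (f a), lam j) ≤ (a : ℕ) ∧
        (a : ℕ) < (∑ j ∈ Finset.Iio (f a), lam j) + lam (f a))
    (x : ℝ) :
    (∏ i, (descPochhammer ℝ (lam i)).eval x) =
      ∑ m ∈ Finset.Icc 1 s, (disjCount (Setoid.ker f) m : ℝ) * (descPochhammer ℝ m).eval x :=
  stmt0_general s r hs lam hsum f hf x
end

section
/- Let s ≥ 1 and let λ = (λ_1 ≥ … ≥ λ_r) be a partition of s with r parts. Let π_λ be the set partition of {1,…,s} whose blocks are the consecutive intervals {λ_1+…+λ_{i−1}+1, …, λ_1+…+λ_i} for i = 1,…,r, and for m ≥ 1 let Disj(π_λ, m) be the number of set partitions η of {1,…,s} with exactly m blocks satisfying π_λ ∧ η = 0̂. Then, as an identity of polynomials in x (equivalently, for every real number x): (x)^{(λ_1)}(x)^{(λ_2)}⋯(x)^{(λ_r)} = Σ_{m=1}^{s} (−1)^{s−m}·Disj(π_λ, m)·(x)^{(m)}. 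-/
open Finset

instance setoidFinite {α : Type*} [Finite α] : Finite (Setoid α) :=
  Finite.of_injective (fun η : Setoid α => (η : α → α → Prop))
    (fun a b h => Setoid.ext fun x y => by simp only at h; rw [h])

/-- Functions with a prescribed kernel correspond to embeddings of the quotient. -/
noncomputable def kerEquiv {α β : Type*} (η : Setoid α) :
    {g : α → β // Setoid.ker g = η} ≃ (Quotient η ↪ β) where
  toFun := fun ⟨g, hg⟩ =>
    ⟨Quotient.lift g (fun a b hab => by rw [← hg] at hab; exact hab), by
      rintro ⟨a⟩ ⟨b⟩ h
      exact Quotient.sound (by rw [← hg]; exact h)⟩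
  invFun e := ⟨fun a => e ⟦a⟧, Setoid.ext fun a b => by
    constructor
    · intro h
      exact Quotient.exact (e.injective h)
    · intro h
      show e ⟦a⟧ = e ⟦b⟧
      exact congrArg e (Quotient.sound h)⟩
  left_inv := fun ⟨g, hg⟩ => rfl
  right_inv e := by
    ext q
    induction q using Quotient.ind
    rfl

lemma card_ker_eq {α β : Type*} [Finite α] [Finite β] (η : Setoid α) :
    Nat.card {g : α → β // Setoid.ker g = η} =
      (Nat.card β).descFactorial (Nat.card (Quotient η)) := by
  classical
  have := Fintype.ofFinite α
  have := Fintype.ofFinite β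
  have := Fintype.ofFinite (Quotient η)
  rw [Nat.card_congr (kerEquiv η), Nat.card_eq_fintype_card, Nat.card_eq_fintype_card,
    Nat.card_eq_fintype_card, Fintype.card_embedding_eq]

/-- Functions injective on each fiber of `f` correspond to families of embeddings. -/
def fiberEquiv {α β κ : Type*} (f : α → κ) :
    {g : α → β // ∀ a b, f a = f b → g a = g b → a = b} ≃
      ∀ i : κ, ({a : α // f a = i} ↪ β) where
  toFun := fun ⟨g, hg⟩ i =>
    ⟨fun a => g a.1, fun a b h => Subtype.ext (hg a.1 b.1 (a.2.trans b.2.symm) h)⟩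
  invFun e := ⟨fun a => e (f a) ⟨a, rfl⟩, by
    have key : ∀ (c : α) (i : κ) (h : f c = i), (e i ⟨c, h⟩ : β) = e (f c) ⟨c, rfl⟩ := by
      rintro c i rfl; rfl
    intro a b hfab hg
    simp only at hg
    rw [← key b (f a) hfab.symm] at hg
    exact congrArg Subtype.val ((e (f a)).injective hg)⟩
  left_inv := fun ⟨g, hg⟩ => rfl
  right_inv e := by
    funext i
    ext ⟨a, ha⟩
    subst ha
    rfl

lemma inf_ker_eq_bot_iff {α κ : Type*} (η : Setoid α) (f : α → κ) :
    η ⊓ Setoid.ker f = ⊥ ↔ ∀ a b : α, f a = f b → η a b → a = b := by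
  constructor
  · intro h a b h1 h2
    have : (η ⊓ Setoid.ker f) a b := Setoid.inf_iff_and.2 ⟨h2, h1⟩
    rw [h] at this
    exact this
  · intro h
    refine le_antisymm (fun a b hab => ?_) bot_le
    rw [Setoid.inf_iff_and] at hab
    exact h a b hab.2 hab.1

/-- Splitting the functions by their kernel. -/
def kernelSigmaEquiv {α β : Type*} (p : Setoid α → Prop) :
    {g : α → β // p (Setoid.ker g)} ≃
      Σ η : {η : Setoid α // p η}, {g : α → β // Setoid.ker g = η.1} where
  toFun := fun ⟨g, hg⟩ => ⟨⟨Setoid.ker g, hg⟩, g, rfl⟩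
  invFun := fun ⟨⟨η, hη⟩, g, hg⟩ => ⟨g, hg ▸ hη⟩
  left_inv := fun ⟨g, hg⟩ => rfl
  right_inv := by
    rintro ⟨⟨η, hη⟩, g, hg⟩
    have hg' : Setoid.ker g = η := hg
    subst hg'
    rfl

section Fiber
variable {s r : ℕ} (lam : Fin r → ℕ) (f : Fin s → Fin r)
  (hsum : ∑ i, lam i = s)
  (hf : ∀ a : Fin s, (∑ j ∈ Finset.Iio (f a), lam j) ≤ (a : ℕ) ∧
      (a : ℕ) < (∑ j ∈ Finset.Iio (f a), lam j) + lam (f a))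

include hsum in
lemma off_add_le (i : Fin r) : (∑ j ∈ Finset.Iio i, lam j) + lam i ≤ s := by
  have h1 : insert i (Finset.Iio i) ⊆ Finset.univ := Finset.subset_univ _
  have h2 : i ∉ Finset.Iio i := by simp
  calc (∑ j ∈ Finset.Iio i, lam j) + lam i = ∑ j ∈ insert i (Finset.Iio i), lam j := by
        rw [Finset.sum_insert h2, add_comm]
    _ ≤ ∑ j, lam j := Finset.sum_le_sum_of_subset h1
    _ = s := hsum

lemma off_mono {i j : Fin r} (hij : i < j) :
    (∑ k ∈ Finset.Iio i, lam k) + lam i ≤ ∑ k ∈ Finset.Iio j, lam k := by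
  have h2 : i ∉ Finset.Iio i := by simp
  have h1 : insert i (Finset.Iio i) ⊆ Finset.Iio j := by
    intro k hk
    simp only [Finset.mem_insert, Finset.mem_Iio] at *
    rcases hk with rfl | hk
    · exact hij
    · exact hk.trans hij
  calc (∑ k ∈ Finset.Iio i, lam k) + lam i = ∑ k ∈ insert i (Finset.Iio i), lam k := by
        rw [Finset.sum_insert h2, add_comm]
    _ ≤ ∑ k ∈ Finset.Iio j, lam k := Finset.sum_le_sum_of_subset h1

include hf in
lemma f_eq_iff (a : Fin s) (i : Fin r) :
    f a = i ↔ (∑ j ∈ Finset.Iio i, lam j) ≤ (a : ℕ) ∧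
      (a : ℕ) < (∑ j ∈ Finset.Iio i, lam j) + lam i := by
  constructor
  · rintro rfl; exact hf a
  · rintro ⟨h1, h2⟩
    obtain ⟨h1', h2'⟩ := hf a
    rcases lt_trichotomy (f a) i with h | h | h
    · exact absurd ((h2'.trans_le (off_mono lam h)).trans_le h1) (lt_irrefl _)
    · exact h
    · exact absurd ((h2.trans_le (off_mono lam h)).trans_le h1') (lt_irrefl _)

include hsum hf in
lemma fiber_card (i : Fin r) : Nat.card {a : Fin s // f a = i} = lam i := by
  have hle := off_add_le lam hsum i
  have e : {a : Fin s // f a = i} ≃ Fin (lam i) :=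
    { toFun := fun a => ⟨(a.1 : ℕ) - ∑ j ∈ Finset.Iio i, lam j, by
        obtain ⟨h1, h2⟩ := (f_eq_iff lam f hf a.1 i).1 a.2
        omega⟩
      invFun := fun k => ⟨⟨(∑ j ∈ Finset.Iio i, lam j) + k.1, by omega⟩, by
        rw [f_eq_iff lam f hf]
        constructor
        · simp
        · simp⟩
      left_inv := fun a => by
        obtain ⟨h1, h2⟩ := (f_eq_iff lam f hf a.1 i).1 a.2
        ext
        simp
        omega
      right_inv := fun k => by
        ext
        simp }
  rw [Nat.card_congr e, Nat.card_eq_fintype_card, Fintype.card_fin]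

end Fiber

section Count

variable {s r : ℕ} (lam : Fin r → ℕ) (f : Fin s → Fin r)

/-- Counting functions injective on each block: product side. -/
lemma count_prod (N : ℕ)
    (hsum : ∑ i, lam i = s)
    (hf : ∀ a : Fin s, (∑ j ∈ Finset.Iio (f a), lam j) ≤ (a : ℕ) ∧
        (a : ℕ) < (∑ j ∈ Finset.Iio (f a), lam j) + lam (f a)) :
    Nat.card {g : Fin s → Fin N // Setoid.ker g ⊓ Setoid.ker f = ⊥} =
      ∏ i, N.descFactorial (lam i) := by
  classical
  have e1 : {g : Fin s → Fin N // Setoid.ker g ⊓ Setoid.ker f = ⊥} ≃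
      {g : Fin s → Fin N // ∀ a b, f a = f b → g a = g b → a = b} :=
    Equiv.subtypeEquivRight fun g => by
      rw [inf_ker_eq_bot_iff]
      exact Iff.rfl
  rw [Nat.card_congr (e1.trans (fiberEquiv f)), Nat.card_pi]
  refine Finset.prod_congr rfl fun i _ => ?_
  have := Fintype.ofFinite {a : Fin s // f a = i}
  rw [Nat.card_eq_fintype_card, Fintype.card_embedding_eq, Fintype.card_fin,
    ← Nat.card_eq_fintype_card, fiber_card lam f hsum hf i]

/-- Counting functions injective on each block: sum side. -/
lemma count_sum (N : ℕ) (hs : 1 ≤ s) :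
    Nat.card {g : Fin s → Fin N // Setoid.ker g ⊓ Setoid.ker f = ⊥} =
      ∑ m ∈ Finset.Icc 1 s, disjCount (Setoid.ker f) m * N.descFactorial m := by
  classical
  set π := Setoid.ker f
  have := Fintype.ofFinite {η : Setoid (Fin s) // η ⊓ π = ⊥}
  rw [Nat.card_congr (kernelSigmaEquiv (fun η => η ⊓ π = ⊥)), Nat.card_eq_fintype_card,
    Fintype.card_sigma]
  simp only [← Nat.card_eq_fintype_card]
  have hterm : ∀ η : {η : Setoid (Fin s) // η ⊓ π = ⊥},
      Nat.card {g : Fin s → Fin N // Setoid.ker g = η.1} =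
        N.descFactorial (Nat.card (Quotient η.1)) := fun η => by
    rw [card_ker_eq, Nat.card_eq_fintype_card, Fintype.card_fin]
  simp only [hterm]
  -- group by the number of blocks
  have hmaps : ∀ η : {η : Setoid (Fin s) // η ⊓ π = ⊥}, η ∈ Finset.univ →
      Nat.card (Quotient η.1) ∈ Finset.Icc 1 s := by
    intro η _
    have h1 : 0 < Nat.card (Quotient η.1) := by
      have : Nonempty (Quotient η.1) := ⟨⟦⟨0, hs⟩⟧⟩
      exact Nat.card_pos
    have h2 : Nat.card (Quotient η.1) ≤ s := by
      have := Nat.card_le_card_of_surjective (Quotient.mk η.1)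
        (Quotient.mk''_surjective)
      simpa using this
    simp only [Finset.mem_Icc]
    omega
  rw [← Finset.sum_fiberwise_of_maps_to hmaps]
  refine Finset.sum_congr rfl fun m hm => ?_
  calc ∑ η ∈ Finset.univ.filter
        (fun η : {η : Setoid (Fin s) // η ⊓ π = ⊥} => Nat.card (Quotient η.1) = m),
        N.descFactorial (Nat.card (Quotient η.1))
      = ∑ η ∈ Finset.univ.filter
        (fun η : {η : Setoid (Fin s) // η ⊓ π = ⊥} => Nat.card (Quotient η.1) = m),
        N.descFactorial m := by
        refine Finset.sum_congr rfl fun η hη => ?_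
        rw [Finset.mem_filter] at hη
        rw [hη.2]
    _ = (Finset.univ.filter
        (fun η : {η : Setoid (Fin s) // η ⊓ π = ⊥} => Nat.card (Quotient η.1) = m)).card *
        N.descFactorial m := by rw [Finset.sum_const, smul_eq_mul]
    _ = disjCount π m * N.descFactorial m := by
        congr 1
        rw [disjCount, ← Nat.card_congr (Equiv.subtypeSubtypeEquivSubtypeInter
            (fun η : Setoid (Fin s) => η ⊓ π = ⊥) (fun η => Nat.card (Quotient η) = m)),
          Nat.card_eq_fintype_card, Fintype.card_subtype]

end Count

/-- Lemma (rising factorial version):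
`(x)^{(λ₁)} ⋯ (x)^{(λ_r)} = Σ_m (−1)^{s−m} Disj(π_λ, m) (x)^{(m)}`,
where `π_λ` is the set partition of `{1,…,s}` into consecutive intervals of lengths
`λ₁, …, λ_r` (encoded as the kernel of the function `f` sending a position to the
index of the interval containing it). -/
theorem stmt1 (s r : ℕ) (hs : 1 ≤ s) (lam : Fin r → ℕ)
    (hpos : ∀ i, 1 ≤ lam i) (hanti : Antitone lam) (hsum : ∑ i, lam i = s)
    (f : Fin s → Fin r)
    (hf : ∀ a : Fin s, (∑ j ∈ Finset.Iio (f a), lam j) ≤ (a : ℕ) ∧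
        (a : ℕ) < (∑ j ∈ Finset.Iio (f a), lam j) + lam (f a))
    (x : ℝ) :
    (∏ i, (ascPochhammer ℝ (lam i)).eval x) =
      ∑ m ∈ Finset.Icc 1 s,
        (-1 : ℝ) ^ (s - m) * (disjCount (Setoid.ker f) m : ℝ) * (ascPochhammer ℝ m).eval x := by
  classical
  have hnat : ∀ N : ℕ, (∏ i, N.descFactorial (lam i))
      = ∑ m ∈ Finset.Icc 1 s, disjCount (Setoid.ker f) m * N.descFactorial m := fun N =>
    (count_prod lam f N hsum hf).symm.trans (count_sum f N hs)
  have hpoly : (∏ i, descPochhammer ℝ (lam i)) =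
      ∑ m ∈ Finset.Icc 1 s,
        Polynomial.C ((disjCount (Setoid.ker f) m : ℝ)) * descPochhammer ℝ m := by
    apply Polynomial.eq_of_infinite_eval_eq
    apply Set.infinite_of_injective_forall_mem (f := fun N : ℕ => (N : ℝ)) Nat.cast_injective
    intro N
    simp only [Set.mem_setOf_eq, Polynomial.eval_prod, Polynomial.eval_finset_sum,
      Polynomial.eval_mul, Polynomial.eval_C, descPochhammer_eval_eq_descFactorial]
    exact_mod_cast hnat N
  have hasc : ∀ (k : ℕ) (y : ℝ), (ascPochhammer ℝ k).eval y
      = (-1 : ℝ) ^ k * (descPochhammer ℝ k).eval (-y) := by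
    intro k y
    have := ascPochhammer_eval_neg_eq_descPochhammer ℝ (-y) k
    simpa using this
  have hdesc : ∀ (k : ℕ) (y : ℝ), (descPochhammer ℝ k).eval (-y)
      = (-1 : ℝ) ^ k * (ascPochhammer ℝ k).eval y := by
    intro k y
    rw [hasc, ← mul_assoc, ← mul_pow]
    simp
  calc ∏ i, (ascPochhammer ℝ (lam i)).eval x
      = ∏ i, ((-1 : ℝ) ^ (lam i) * (descPochhammer ℝ (lam i)).eval (-x)) :=
        Finset.prod_congr rfl fun i _ => hasc _ _
    _ = (-1 : ℝ) ^ s * (∏ i, descPochhammer ℝ (lam i)).eval (-x) := by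
        rw [Finset.prod_mul_distrib, Finset.prod_pow_eq_pow_sum, hsum, Polynomial.eval_prod]
    _ = (-1 : ℝ) ^ s * ∑ m ∈ Finset.Icc 1 s,
          (disjCount (Setoid.ker f) m : ℝ) * (descPochhammer ℝ m).eval (-x) := by
        rw [hpoly, Polynomial.eval_finset_sum]
        simp [Polynomial.eval_mul]
    _ = ∑ m ∈ Finset.Icc 1 s,
          (-1 : ℝ) ^ (s - m) * (disjCount (Setoid.ker f) m : ℝ)
            * (ascPochhammer ℝ m).eval x := by
        rw [Finset.mul_sum]
        refine Finset.sum_congr rfl fun m hm => ?_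
        rw [hdesc]
        obtain ⟨hm1, hm2⟩ := Finset.mem_Icc.1 hm
        obtain ⟨k, rfl⟩ : ∃ k, s = m + k := ⟨s - m, by omega⟩
        have hsm : (m + k) - m = k := by omega
        rw [hsm]
        have hsign : ((-1 : ℝ)) ^ (m + k) * (-1) ^ m = (-1) ^ k := by
          rw [← pow_add, show m + k + m = 2 * m + k by ring, pow_add, pow_mul]
          norm_num
        calc (-1 : ℝ) ^ (m + k) * ((disjCount (Setoid.ker f) m : ℝ)
              * ((-1) ^ m * (ascPochhammer ℝ m).eval x))
            = ((-1 : ℝ) ^ (m + k) * (-1) ^ m) * ((disjCount (Setoid.ker f) m : ℝ)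
              * (ascPochhammer ℝ m).eval x) := by ring
          _ = (-1 : ℝ) ^ k * (disjCount (Setoid.ker f) m : ℝ)
              * (ascPochhammer ℝ m).eval x := by rw [hsign]; ring
end

section
/- Let s ≥ 1 and let λ = (λ_1 ≥ … ≥ λ_r) be a partition of s with r ≥ 2 parts. Let π_λ be the set partition of {1,…,s} whose blocks are the consecutive intervals {λ_1+…+λ_{i−1}+1, …, λ_1+…+λ_i} for i = 1,…,r, and for m ≥ 1 let Disj(π_λ, m) be the number of set partitions η of {1,…,s} with exactly m blocks satisfying π_λ ∧ η = 0̂. Then Σ_{m=1}^{s} (−1)^{m−1}·(m−1)!·Disj(π_λ, m) = 0. -/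
open Finset

/-- A form of Weisner's theorem, with `w` in the role of `μ(·, ⊤)`. -/
theorem sum_inf_eq_bot_eq_zero {L R : Type*} [Lattice L] [BoundedOrder L] [Fintype L]
    [DecidableEq L] [DecidableLE L] [CommRing R] (w : L → R)
    (hw : ∀ σ, ∑ η with σ ≤ η, w η = if σ = ⊤ then 1 else 0) {π : L} (hπ : π ≠ ⊤) :
    ∑ η with η ⊓ π = ⊥, w η = 0 := by
  classical
  let := Fintype.toLocallyFiniteOrder (α := L)
  open IncidenceAlgebra in
  calc ∑ η with η ⊓ π = ⊥, w η
      = ∑ η, ∑ σ ∈ Icc ⊥ (η ⊓ π), mu R ⊥ σ * w η := by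
        rw [sum_filter]
        refine sum_congr rfl fun η _ => ?_
        rw [← sum_mul, sum_Icc_mu_right]
        split_ifs <;> simp_all [eq_comm]
    _ = ∑ σ, ∑ η with σ ≤ η ∧ σ ≤ π, mu R ⊥ σ * w η :=
        sum_comm' fun η σ => by simp
    _ = 0 := sum_eq_zero fun σ _ => by
        by_cases hσ : σ ≤ π
        · simp only [hσ, and_true, ← mul_sum, hw, if_neg (ne_top_of_le_ne_top hπ hσ), mul_zero]
        · simp [hσ]

noncomputable instance {α : Type*} [Finite α] : Fintype (Setoid α) :=
  have : Finite (Setoid α) := .of_injective (fun η : Setoid α => η.r) fun η η' h => by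
    cases η; cases η'; congr
  .ofFinite _

/-- `μ(η, ⊤)` in the partition lattice for `η` with `m` blocks; the truncated `m - 1` makes it `1`
at `m = 0`, which is right for the partition of the empty type. -/
def mobiusToTop (m : ℕ) : ℤ := (-1) ^ (m - 1) * (m - 1).factorial

lemma mobiusToTop_of_le_one {m : ℕ} (hm : m ≤ 1) : mobiusToTop m = 1 := by
  simp [mobiusToTop, Nat.sub_eq_zero_of_le hm]

lemma mobiusToTop_add_two (k : ℕ) : mobiusToTop (k + 2) + (k + 1) * mobiusToTop (k + 1) = 0 := by
  simp only [mobiusToTop, show k + 2 - 1 = k + 1 from rfl, Nat.add_sub_cancel, Nat.factorial_succ,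
    pow_succ]
  push_cast
  ring

namespace Setoid
variable {γ : Type*}

/-- The partition of `Option γ` restricting to `ρ` in which `none` joins the block `t`, or is a
singleton when `t = none`. -/
def extendOption (ρ : Setoid γ) (t : Option (Quotient ρ)) : Setoid (Option γ) :=
  ker fun o => o.elim t (some ∘ Quotient.mk ρ)

@[simp] lemma extendOption_some_some (ρ : Setoid γ) (t : Option (Quotient ρ)) (x y : γ) :
    extendOption ρ t (some x) (some y) ↔ ρ x y := by
  rw [extendOption, ker_def]; simp [Quotient.eq]

@[simp] lemma extendOption_none_some (ρ : Setoid γ) (t : Option (Quotient ρ)) (x : γ) :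
    extendOption ρ t none (some x) ↔ t = some ⟦x⟧ := by
  rw [extendOption, ker_def]; rfl

@[simp] lemma extendOption_some_none (ρ : Setoid γ) (t : Option (Quotient ρ)) (x : γ) :
    extendOption ρ t (some x) none ↔ t = some ⟦x⟧ := by
  rw [extendOption, ker_def]; exact eq_comm

lemma comap_some_extendOption (ρ : Setoid γ) (t : Option (Quotient ρ)) :
    comap some (extendOption ρ t) = ρ := by
  ext x y; simp [comap_rel]

lemma extendOption_injective (ρ : Setoid γ) : Function.Injective (extendOption ρ) := by
  intro t t' h
  have key : ∀ x, t = some ⟦x⟧ ↔ t' = some ⟦x⟧ := fun x => by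
    rw [← extendOption_none_some, ← extendOption_none_some, h]
  rcases t with _ | ⟨⟨x⟩⟩
  · rcases t' with _ | ⟨⟨y⟩⟩
    · rfl
    · simpa using (key y).2 rfl
  · exact ((key x).1 rfl).symm

lemma exists_extendOption_eq (η : Setoid (Option γ)) :
    ∃ t, extendOption (comap some η) t = η := by
  classical
  by_cases h : ∃ x, η none (some x)
  · obtain ⟨x, hx⟩ := h
    refine ⟨some ⟦x⟧, ext ?_⟩
    rintro (_ | u) (_ | v)
    · exact iff_of_true ((extendOption _ _).refl _) (η.refl _)
    · simp only [extendOption_none_some, Option.some.injEq, Quotient.eq, comap_rel]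
      exact ⟨fun h => η.trans hx h, fun h => η.trans (η.symm hx) h⟩
    · simp only [extendOption_some_none, Option.some.injEq, Quotient.eq, comap_rel]
      exact ⟨fun h => η.trans (η.symm h) (η.symm hx), fun h => η.symm (η.trans h hx)⟩
    · simp [comap_rel]
  · refine ⟨none, ext ?_⟩
    rintro (_ | u) (_ | v)
    · exact iff_of_true ((extendOption _ _).refl _) (η.refl _)
    · simpa using fun h' => h ⟨v, h'⟩
    · simpa using fun h' => h ⟨u, η.symm h'⟩
    · simp [comap_rel]

lemma card_quotient_extendOption_none [Finite γ] (ρ : Setoid γ) :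
    Nat.card (Quotient (extendOption ρ none)) = Nat.card (Quotient ρ) + 1 := by
  have hsurj : Function.Surjective fun o : Option γ => o.elim none (some ∘ Quotient.mk ρ) := by
    rintro (_ | ⟨⟨x⟩⟩)
    exacts [⟨none, rfl⟩, ⟨some x, rfl⟩]
  rw [extendOption, Nat.card_congr (quotientKerEquivOfSurjective _ hsurj), Finite.card_option]

lemma card_quotient_extendOption_some (ρ : Setoid γ) (q : Quotient ρ) :
    Nat.card (Quotient (extendOption ρ (some q))) = Nat.card (Quotient ρ) := by
  have hker : extendOption ρ (some q) = ker fun o : Option γ => o.elim q (Quotient.mk ρ) := by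
    ext (_ | x) (_ | y) <;> simp [ker_def, Quotient.eq, eq_comm]
  have hsurj : Function.Surjective fun o : Option γ => o.elim q (Quotient.mk ρ) := by
    rintro ⟨x⟩
    exact ⟨some x, rfl⟩
  rw [hker, Nat.card_congr (quotientKerEquivOfSurjective _ hsurj)]

noncomputable def sigmaExtendOptionEquiv :
    (Σ ρ : Setoid γ, Option (Quotient ρ)) ≃ Setoid (Option γ) :=
  .ofBijective (fun p => extendOption p.1 p.2) ⟨by
    rintro ⟨ρ, t⟩ ⟨ρ', t'⟩ h
    obtain rfl : ρ = ρ' := by simpa [comap_some_extendOption] using congrArg (comap some) h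
    exact congrArg (Sigma.mk ρ) (extendOption_injective ρ h),
    fun η => ⟨⟨_, _⟩, (exists_extendOption_eq η).choose_spec⟩⟩

theorem sum_mobiusToTop_option [Fintype γ] [Nonempty γ] :
    ∑ η : Setoid (Option γ), mobiusToTop (Nat.card (Quotient η)) = 0 := by
  classical
  rw [← Fintype.sum_equiv sigmaExtendOptionEquiv
    (fun p => mobiusToTop (Nat.card (Quotient (extendOption p.1 p.2)))) _ fun _ => rfl,
    Fintype.sum_sigma]
  refine sum_eq_zero fun ρ _ => ?_
  have : Nonempty (Quotient ρ) := ⟨⟦Classical.arbitrary γ⟧⟩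
  obtain ⟨k, hk⟩ : ∃ k, Nat.card (Quotient ρ) = k + 1 :=
    Nat.exists_eq_succ_of_ne_zero Nat.card_pos.ne'
  simp only [Fintype.sum_option, card_quotient_extendOption_none, card_quotient_extendOption_some,
    sum_const, card_univ, ← Nat.card_eq_fintype_card, hk, nsmul_eq_mul]
  push_cast
  exact mobiusToTop_add_two k

def comapEquiv {α β : Type*} (e : α ≃ β) : Setoid β ≃ Setoid α where
  toFun := comap e
  invFun := comap e.symm
  left_inv η := by ext; simp [comap_rel]
  right_inv η := by ext; simp [comap_rel]

lemma card_quotient_comapEquiv {α β : Type*} (e : α ≃ β) (η : Setoid β) :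
    Nat.card (Quotient (comapEquiv e η)) = Nat.card (Quotient η) :=
  Nat.card_congr (Quotient.congr e fun _ _ => Iff.rfl)

theorem sum_mobiusToTop {β : Type*} [Fintype β] :
    ∑ η : Setoid β, mobiusToTop (Nat.card (Quotient η)) = if Nat.card β ≤ 1 then 1 else 0 := by
  classical
  split_ifs with hβ
  · have : Subsingleton β := Finite.card_le_one_iff_subsingleton.1 hβ
    have : Subsingleton (Setoid β) :=
      ⟨fun η η' => ext fun x y => by simp [Subsingleton.elim x y]⟩
    rw [Fintype.sum_subsingleton _ ⊥,
      mobiusToTop_of_le_one (Finite.card_le_one_iff_subsingleton.2 inferInstance)]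
  · obtain ⟨a, b, hab⟩ := Finite.one_lt_card_iff_nontrivial.1 (not_le.1 hβ)
    have : Nonempty {c // c ≠ a} := ⟨⟨b, hab.symm⟩⟩
    rw [Fintype.sum_equiv (comapEquiv (Equiv.optionSubtypeNe a)) _
      (fun η => mobiusToTop (Nat.card (Quotient η)))
      fun η => congrArg mobiusToTop (card_quotient_comapEquiv _ η).symm]
    exact sum_mobiusToTop_option

lemma card_quotient_correspondence_symm {β : Type*} (σ : Setoid β) (t : Setoid (Quotient σ)) :
    Nat.card (Quotient ((correspondence σ).symm t).1) = Nat.card (Quotient t) := by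
  have hsurj : Function.Surjective (Quotient.mk'' ∘ Quotient.mk' : β → Quotient t) :=
    Quotient.mk''_surjective.comp Quotient.mk'_surjective
  change Nat.card (Quotient (comap Quotient.mk' t)) = _
  rw [Nat.card_congr (comapQuotientEquiv Quotient.mk' t), Set.range_eq_univ.2 hsurj, Nat.card_univ]

theorem sum_mobiusToTop_of_le {β : Type*} [Fintype β] [DecidableEq (Setoid β)]
    [DecidableLE (Setoid β)] (σ : Setoid β) :
    ∑ η with σ ≤ η, mobiusToTop (Nat.card (Quotient η)) = if σ = ⊤ then 1 else 0 := by
  classical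
  rw [sum_subtype (p := (σ ≤ ·)) _ (fun η => by simp)
      (fun η => mobiusToTop (Nat.card (Quotient η))),
    ← Fintype.sum_equiv (correspondence σ).symm.toEquiv _ _
      fun t => congrArg mobiusToTop (card_quotient_correspondence_symm σ t).symm,
    sum_mobiusToTop]
  simp only [Finite.card_le_one_iff_subsingleton, Quotient.subsingleton_iff]

end Setoid

theorem sum_Icc_mobiusToTop_mul_disjCount {s : ℕ} (hs : 1 ≤ s) [DecidableEq (Setoid (Fin s))]
    (π : Setoid (Fin s)) :
    ∑ m ∈ Icc 1 s, mobiusToTop m * (disjCount π m : ℤ) =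
      ∑ η with η ⊓ π = ⊥, mobiusToTop (Nat.card (Quotient η)) := by
  have hcard (η : Setoid (Fin s)) : Nat.card (Quotient η) ∈ Icc 1 s :=
    have : Nonempty (Quotient η) := ⟨⟦⟨0, hs⟩⟧⟩
    mem_Icc.2 ⟨Nat.card_pos, by
      simpa using Nat.card_le_card_of_surjective (Quotient.mk η) Quotient.mk_surjective⟩
  rw [← sum_fiberwise_of_maps_to fun η _ => hcard η]
  refine sum_congr rfl fun m _ => ?_
  rw [disjCount, Nat.card_eq_fintype_card, Fintype.card_subtype, filter_filter,
    sum_congr rfl fun η hη => congrArg mobiusToTop (mem_filter.1 hη).2.2, sum_const, nsmul_eq_mul,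
    mul_comm]

lemma exists_ne_of_intervals {s r : ℕ} (hr : 2 ≤ r) (lam : Fin r → ℕ) (hpos : ∀ i, 1 ≤ lam i)
    (hsum : ∑ i, lam i = s) (f : Fin s → Fin r)
    (hf : ∀ a : Fin s, (∑ j ∈ Iio (f a), lam j) ≤ (a : ℕ) ∧
        (a : ℕ) < (∑ j ∈ Iio (f a), lam j) + lam (f a)) :
    ∃ a b : Fin s, f a ≠ f b := by
  let i₀ : Fin r := ⟨0, by omega⟩
  let i₁ : Fin r := ⟨1, by omega⟩
  have hlt : lam i₀ < s := by
    have : lam i₀ + lam i₁ ≤ ∑ i, lam i :=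
      add_le_sum (fun i _ => Nat.zero_le _) (mem_univ _) (mem_univ _) (by simp [i₀, i₁])
    have := hpos i₁
    omega
  refine ⟨⟨0, by omega⟩, ⟨lam i₀, hlt⟩, fun h => ?_⟩
  have hfirst : f ⟨0, by omega⟩ = i₀ := by
    by_contra hne
    have hmem : i₀ ∈ Iio (f ⟨0, by omega⟩) :=
      mem_Iio.2 (Fin.lt_def.2 (Nat.pos_of_ne_zero fun h₀ => hne (Fin.ext h₀)))
    have := single_le_sum (fun i _ => Nat.zero_le (lam i)) hmem
    have := (hf ⟨0, by omega⟩).1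
    have := hpos i₀
    simp_all
  have hempty : Iio i₀ = ∅ := Iio_eq_empty.2 fun j _ => Nat.zero_le j
  have := (hf ⟨lam i₀, hlt⟩).2
  simp [← h, hfirst, hempty] at this

theorem stmt2_general (s r : ℕ) (hr : 2 ≤ r) (lam : Fin r → ℕ)
    (hpos : ∀ i, 1 ≤ lam i) (hsum : ∑ i, lam i = s)
    (f : Fin s → Fin r)
    (hf : ∀ a : Fin s, (∑ j ∈ Finset.Iio (f a), lam j) ≤ (a : ℕ) ∧
        (a : ℕ) < (∑ j ∈ Finset.Iio (f a), lam j) + lam (f a)) :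
    (∑ m ∈ Finset.Icc 1 s,
        (-1 : ℤ) ^ (m - 1) * (Nat.factorial (m - 1) : ℤ) *
          (disjCount (Setoid.ker f) m : ℤ)) = 0 := by
  classical
  obtain ⟨a, b, hab⟩ := exists_ne_of_intervals hr lam hpos hsum f hf
  have hπ : Setoid.ker f ≠ ⊤ := fun h => hab (Setoid.ker_def.1 (h ▸ trivial))
  exact (sum_Icc_mobiusToTop_mul_disjCount a.pos (Setoid.ker f)).trans
    (sum_inf_eq_bot_eq_zero _ Setoid.sum_mobiusToTop_of_le hπ)

/-- For a partition `λ` of `s` with at least two parts,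
`Σ_{m=1}^{s} (−1)^{m−1} (m−1)! Disj(π_λ, m) = 0`, where `π_λ` is the set partition of
`{1,…,s}` into consecutive intervals of lengths `λ₁, …, λ_r` (encoded as the kernel of
the function `f` sending a position to the index of the interval containing it). -/
theorem stmt2 (s r : ℕ) (hs : 1 ≤ s) (hr : 2 ≤ r) (lam : Fin r → ℕ)
    (hpos : ∀ i, 1 ≤ lam i) (hanti : Antitone lam) (hsum : ∑ i, lam i = s)
    (f : Fin s → Fin r)
    (hf : ∀ a : Fin s, (∑ j ∈ Finset.Iio (f a), lam j) ≤ (a : ℕ) ∧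
        (a : ℕ) < (∑ j ∈ Finset.Iio (f a), lam j) + lam (f a)) :
    (∑ m ∈ Finset.Icc 1 s,
        (-1 : ℤ) ^ (m - 1) * (Nat.factorial (m - 1) : ℤ) *
          (disjCount (Setoid.ker f) m : ℤ)) = 0 :=
  stmt2_general s r hr lam hpos hsum f hf
end

section
/- Let r ≥ 1 and let σ_1,…,σ_r be finitely supported permutations of ℕ, each of which is a single cycle, with σ_j of length k_j ≥ 2 (i.e., the support of σ_j has cardinality k_j). Assume the family jointly intersects: the graph on {1,…,r} in which j and j′ are adjacent whenever the supports of σ_j and σ_{j′} intersect is connected. Then 2·|supp(σ_1) ∪ ⋯ ∪ supp(σ_r)| ≤ |σ_1σ_2⋯σ_r| − r + (k_1+⋯+k_r) + 2, where |τ| denotes the Cayley distance of a finitely supported permutation τ. -/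
/-!
Factor each cycle `σ_j` into `k_j - 1` transpositions whose graph connects its support, and
concatenate: this gives `∑ k_j - r` transpositions with product `π = σ_1 ⋯ σ_r` whose graph is
connected on the union `U` of the supports, by joint intersection. Let `c` be the number of cycles
of `π` on `U`, fixed points included. Prepending transpositions one at a time shows
`|U| + c ≤ (∑ k_j - r) + 2`: each changes the number of cycles by one and can merge two components
of the graph only when it merges two cycles. On the other hand `|U| - c ≤ |π|`, since each
transposition changes the number of cycles by one. Adding the two inequalities gives the claim.
-/

/-- The Cayley distance of a (finitely supported) permutation of `ℕ`: the minimal number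
of transpositions whose product is `τ`. -/
noncomputable def cayleyDist (τ : Equiv.Perm ℕ) : ℕ :=
  sInf {m | ∃ l : List (Equiv.Perm ℕ), l.length = m ∧
    (∀ g ∈ l, ∃ a b, a ≠ b ∧ g = Equiv.swap a b) ∧ l.prod = τ}

/-- The intersection graph of a family of permutations: `j` and `j'` are adjacent
whenever the supports of `σ j` and `σ j'` intersect. -/
def intersectGraph {r : ℕ} (σ : Fin r → Equiv.Perm ℕ) : SimpleGraph (Fin r) :=
  SimpleGraph.fromRel fun j j' => ({x | σ j x ≠ x} ∩ {x | σ j' x ≠ x}).Nonempty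

open Equiv Equiv.Perm Relation

variable {α : Type*}

namespace Setoid

noncomputable def classCount (r : Setoid α) (S : Set α) : ℕ :=
  ((fun x => {y | r x y}) '' S).ncard

variable {r r' : Setoid α} {S : Set α} {a b x : α}

theorem setOf_rel_eq_iff {x y : α} : {z | r x z} = {z | r y z} ↔ r x y := by
  refine ⟨fun h => ?_, fun h => Set.ext fun z => ⟨r.trans' (r.symm' h), r.trans' h⟩⟩
  have : y ∈ {z | r y z} := r.refl' y
  rwa [← h] at this

theorem classCount_le_ncard (hS : S.Finite) : r.classCount S ≤ S.ncard :=
  Set.ncard_image_le hS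

theorem classCount_eq_ncard (hr : ∀ x y, r x y → x = y) : r.classCount S = S.ncard :=
  Set.InjOn.ncard_image fun x _ y _ h => hr x y (setOf_rel_eq_iff.1 h)

theorem classCount_le_one (hS : S.Finite) (hrel : ∀ x ∈ S, ∀ y ∈ S, r x y) :
    r.classCount S ≤ 1 := by
  rw [classCount, Set.ncard_le_one (hS.image _)]
  rintro _ ⟨x, hx, rfl⟩ _ ⟨y, hy, rfl⟩
  exact setOf_rel_eq_iff.2 (hrel x hx y hy)

theorem classCount_pair_of_rel (h : r a b) : r.classCount {a, b} = 1 := by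
  rw [classCount, Set.image_pair, setOf_rel_eq_iff.2 h, Set.pair_eq_singleton, Set.ncard_singleton]

theorem classCount_pair_of_not_rel (h : ¬r a b) : r.classCount {a, b} = 2 := by
  rw [classCount, Set.image_pair, Set.ncard_pair (mt setOf_rel_eq_iff.1 h)]

theorem one_le_classCount_pair : 1 ≤ r.classCount {a, b} := by
  by_cases h : r a b
  · rw [classCount_pair_of_rel h]
  · rw [classCount_pair_of_not_rel h]; omega

theorem classCount_pair_le_two : r.classCount {a, b} ≤ 2 := by
  by_cases h : r a b
  · rw [classCount_pair_of_rel h]; omega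
  · rw [classCount_pair_of_not_rel h]

theorem classCount_insert_of_isolated (hS : S.Finite) (hx : x ∉ S) (hiso : ∀ y, r x y → y = x) :
    r.classCount (insert x S) = r.classCount S + 1 := by
  rw [classCount, Set.image_insert_eq, Set.ncard_insert_of_notMem _ (hS.image _)]
  · rfl
  rintro ⟨y, hy, hxy⟩
  exact hx (hiso y (r.symm' (setOf_rel_eq_iff.1 hxy)) ▸ hy)

theorem classCount_eq_sep_add_classCount_pair (hS : S.Finite) (ha : a ∈ S) (hb : b ∈ S) :
    r.classCount S = r.classCount {x ∈ S | ¬r x a ∧ ¬r x b} + r.classCount {a, b} := by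
  have hsplit : S = {x ∈ S | ¬r x a ∧ ¬r x b} ∪ {x ∈ S | r x a ∨ r x b} := by
    ext x; by_cases hxa : r x a <;> by_cases hxb : r x b <;> simp [hxa, hxb]
  have hnear : (fun x => {y | r x y}) '' {x ∈ S | r x a ∨ r x b} =
      (fun x => {y | r x y}) '' {a, b} := by
    apply Set.Subset.antisymm
    · rintro _ ⟨x, ⟨-, hx | hx⟩, rfl⟩
      · exact ⟨a, Or.inl rfl, setOf_rel_eq_iff.2 (r.symm' hx)⟩
      · exact ⟨b, Or.inr rfl, setOf_rel_eq_iff.2 (r.symm' hx)⟩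
    · rintro _ ⟨x, rfl | rfl, rfl⟩
      · exact ⟨x, ⟨ha, Or.inl (r.refl' x)⟩, rfl⟩
      · exact ⟨x, ⟨hb, Or.inr (r.refl' x)⟩, rfl⟩
  rw [classCount, classCount, classCount, ← hnear]
  conv_lhs => rw [hsplit, Set.image_union]
  refine Set.ncard_union_eq ?_ ((hS.subset fun x hx => hx.1).image _)
    ((hS.subset fun x hx => hx.1).image _)
  rw [Set.disjoint_left]
  rintro _ ⟨x, ⟨-, hxa, hxb⟩, rfl⟩ ⟨y, ⟨-, hy⟩, hxy⟩
  have hyx : r y x := setOf_rel_eq_iff.1 hxy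
  rcases hy with hy | hy
  · exact hxa (r.trans' (r.symm' hyx) hy)
  · exact hxb (r.trans' (r.symm' hyx) hy)

theorem classCount_add_classCount_pair_eq (hS : S.Finite) (ha : a ∈ S) (hb : b ∈ S)
    (h : ∀ x, ¬r x a → ¬r x b → ∀ y, r x y ↔ r' x y)
    (h' : ∀ x, ¬r' x a → ¬r' x b → ∀ y, r x y ↔ r' x y) :
    r.classCount S + r'.classCount {a, b} = r'.classCount S + r.classCount {a, b} := by
  have hT : {x ∈ S | ¬r x a ∧ ¬r x b} = {x ∈ S | ¬r' x a ∧ ¬r' x b} := by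
    ext x
    refine ⟨fun ⟨hx, hxa, hxb⟩ => ⟨hx, ?_, ?_⟩, fun ⟨hx, hxa, hxb⟩ => ⟨hx, ?_, ?_⟩⟩
    · rwa [← h x hxa hxb]
    · rwa [← h x hxa hxb]
    · rwa [h' x hxa hxb]
    · rwa [h' x hxa hxb]
  have hcount : r.classCount {x ∈ S | ¬r x a ∧ ¬r x b} =
      r'.classCount {x ∈ S | ¬r x a ∧ ¬r x b} := by
    rw [classCount, classCount]
    congr 1
    exact Set.image_congr fun x hx => Set.ext (h x hx.2.1 hx.2.2)
  rw [classCount_eq_sep_add_classCount_pair hS ha hb,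
    classCount_eq_sep_add_classCount_pair (r := r') hS ha hb, hcount, hT]
  omega

end Setoid

namespace Equiv.Perm

variable {f : Perm α} {a b x y : α}

theorem zpow_apply_eq_zpow_apply {g : Perm α} (h : ∀ n : ℤ, g ((f ^ n) x) = f ((f ^ n) x))
    (n : ℤ) : (g ^ n) x = (f ^ n) x := by
  have hsucc : ∀ (p : Perm α) (n : ℤ) y, (p ^ (n + 1)) y = p ((p ^ n) y) := fun p n y => by
    rw [add_comm, zpow_add, zpow_one, mul_apply]
  induction n using Int.induction_on with
  | zero => rfl
  | succ n ih => rw [hsucc, hsucc, ih, h]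
  | pred n ih =>
    apply g.injective
    rw [← hsucc, sub_add_cancel, ih, h, ← hsucc, sub_add_cancel]

theorem SameCycle.rel_of_forall_rel_apply (hxy : f.SameCycle x y) {r : Setoid α}
    (h : ∀ x, r x (f x)) : r x y := by
  obtain ⟨n, rfl⟩ := hxy
  induction n using Int.induction_on with
  | zero => exact r.refl' x
  | succ n ih =>
    rw [add_comm, zpow_add, zpow_one, mul_apply]
    exact r.trans' ih (h _)
  | pred n ih =>
    have hstep := h ((f ^ (-(n : ℤ) - 1)) x)
    rw [← mul_apply, ← zpow_one_add, add_sub_cancel] at hstep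
    exact r.trans' ih (r.symm' hstep)

variable [DecidableEq α]

theorem support_mul_subset (f g : Perm α) :
    {x | (f * g) x ≠ x} ⊆ {x | f x ≠ x} ∪ {x | g x ≠ x} := by
  intro x hx
  by_contra h
  simp only [Set.mem_union, Set.mem_ofPred_eq, not_or, not_not] at h
  exact hx (by rw [mul_apply, h.2, h.1])

theorem support_prod_subset {l : List (Perm α)} {S : Set α}
    (h : ∀ g ∈ l, {x | g x ≠ x} ⊆ S) : {x | l.prod x ≠ x} ⊆ S := by
  induction l with
  | nil => simp
  | cons g l ih =>
    rw [List.prod_cons]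
    exact (support_mul_subset _ _).trans (Set.union_subset (h g List.mem_cons_self)
      (ih fun g' hg' => h g' (List.mem_cons_of_mem _ hg')))

theorem exists_pow_succ_apply_eq (hf : {x | f x ≠ x}.Finite) (a : α) :
    ∃ n : ℕ, (f ^ (n + 1)) a = a := by
  by_cases ha : f a = a
  · exact ⟨0, by rwa [zero_add, pow_one]⟩
  have hmaps : Set.MapsTo f {x | f x ≠ x} {x | f x ≠ x} := fun x hx h => hx (f.injective h)
  have := hf.to_subtype
  obtain ⟨n, hn, hper⟩ := Function.mem_periodicPts.1 <|
    (hmaps.restrict_inj.2 f.injective.injOn).mem_periodicPts ⟨a, ha⟩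
  refine ⟨n - 1, ?_⟩
  rw [Nat.sub_add_cancel hn, ← iterate_eq_pow]
  simpa [Function.IsPeriodicPt, Function.IsFixedPt, hmaps.iterate_restrict, Subtype.ext_iff]
    using hper

/-- Along the `f`-orbit of `a`, `swap a b * f` agrees with `f` except that the step back into `a`
is sent to `b` instead. -/
theorem sameCycle_swap_mul_of_not_sameCycle (hf : {x | f x ≠ x}.Finite)
    (h : ¬f.SameCycle a b) : (swap a b * f).SameCycle a b := by
  have hlast : ∀ x, f x = a → (swap a b * f).SameCycle x b := fun x hx =>
    ⟨1, by rw [zpow_one, mul_apply, hx, swap_apply_left]⟩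
  have key : ∀ (m : ℕ) x, (f ^ (m + 1)) x = a → (swap a b * f).SameCycle x b := by
    intro m
    induction m with
    | zero => intro x hx; exact hlast x (by simpa using hx)
    | succ m ih =>
      intro x hx
      by_cases hfx : f x = a
      · exact hlast x hfx
      have hmx : (f ^ (m + 1)) (f x) = a := by rwa [← mul_apply, ← pow_succ]
      have hfxa : f.SameCycle (f x) a := ⟨(m + 1 : ℕ), by rwa [zpow_natCast]⟩
      have hfxb : f x ≠ b := fun hfxb => h (hfxb ▸ hfxa).symm
      have hg : (swap a b * f) x = f x := by rw [mul_apply, swap_apply_of_ne_of_ne hfx hfxb]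
      exact sameCycle_apply_left.1 (hg ▸ ih (f x) hmx)
  obtain ⟨n, hn⟩ := exists_pow_succ_apply_eq hf a
  exact key n a hn

theorem sameCycle_swap_mul_iff (hxa : ¬f.SameCycle x a) (hxb : ¬f.SameCycle x b) :
    (swap a b * f).SameCycle x y ↔ f.SameCycle x y := by
  have h : ∀ n : ℤ, (swap a b * f) ((f ^ n) x) = f ((f ^ n) x) := fun n => by
    rw [mul_apply, ← mul_apply f, ← zpow_one_add]
    exact swap_apply_of_ne_of_ne (fun h => hxa ⟨_, h⟩) (fun h => hxb ⟨_, h⟩)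
  simp only [SameCycle, zpow_apply_eq_zpow_apply h]

theorem classCount_sameCycle_swap_mul {S : Set α} (hS : S.Finite) (ha : a ∈ S) (hb : b ∈ S) :
    (SameCycle.setoid f).classCount S + (SameCycle.setoid (swap a b * f)).classCount {a, b} =
      (SameCycle.setoid (swap a b * f)).classCount S + (SameCycle.setoid f).classCount {a, b} := by
  refine Setoid.classCount_add_classCount_pair_eq hS ha hb
    (fun x hxa hxb y => (sameCycle_swap_mul_iff hxa hxb).symm) fun x hxa hxb y => ?_
  have := sameCycle_swap_mul_iff (y := y) hxa hxb
  rwa [swap_mul_self_mul] at this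

theorem ncard_insert_add_classCount_sameCycle {S : Set α} (hS : S.Finite)
    (hsupp : {x | f x ≠ x} ⊆ S) (x : α) :
    (insert x S).ncard + (SameCycle.setoid f).classCount S =
      S.ncard + (SameCycle.setoid f).classCount (insert x S) := by
  by_cases hx : x ∈ S
  · rw [Set.insert_eq_self.2 hx]
  have hfix : f x = x := by by_contra h; exact hx (hsupp h)
  rw [Set.ncard_insert_of_notMem hx hS, Setoid.classCount_insert_of_isolated hS hx
    fun y h => (SameCycle.eq_of_left h hfix).symm]
  omega

end Equiv.Perm

open Equiv.Perm

/-- For a list of transpositions, the classes are the connected components of its graph. -/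
def linkedBy (l : List (Perm α)) : Setoid α :=
  EqvGen.setoid fun x y => ∃ g ∈ l, g x = y

section linkedBy

variable {l l' : List (Perm α)} {a b x y : α}

theorem linkedBy_apply {g : Perm α} (hg : g ∈ l) (x : α) : linkedBy l x (g x) :=
  EqvGen.rel _ _ ⟨g, hg, rfl⟩

theorem linkedBy_mono (h : l ⊆ l') : linkedBy l ≤ linkedBy l' :=
  Setoid.eqvGen_mono fun _ _ ⟨g, hg, hy⟩ => ⟨g, h hg, hy⟩

theorem eq_of_linkedBy_nil (h : linkedBy ([] : List (Perm α)) x y) : x = y := by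
  have hbot : linkedBy ([] : List (Perm α)) ≤ ⊥ :=
    Setoid.eqvGen_le fun _ _ ⟨_, hg, _⟩ => absurd hg List.not_mem_nil
  simpa [Setoid.bot_def] using hbot h

theorem linkedBy_prod_apply (l : List (Perm α)) (x : α) : linkedBy l x (l.prod x) := by
  induction l with
  | nil => exact (linkedBy []).refl' x
  | cons g l ih =>
    rw [List.prod_cons, mul_apply]
    exact (linkedBy (g :: l)).trans' (linkedBy_mono (List.subset_cons_self g l) ih)
      (linkedBy_apply List.mem_cons_self _)

theorem linkedBy_of_sameCycle (h : l.prod.SameCycle x y) : linkedBy l x y :=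
  h.rel_of_forall_rel_apply (linkedBy_prod_apply l)

variable [DecidableEq α]

theorem linkedBy_cons_swap (h : linkedBy (swap a b :: l) x y) :
    linkedBy l x y ∨ ((linkedBy l x a ∨ linkedBy l x b) ∧ (linkedBy l y a ∨ linkedBy l y b)) := by
  have hnear : ∀ {u v}, linkedBy l u v → (linkedBy l v a ∨ linkedBy l v b) →
      (linkedBy l u a ∨ linkedBy l u b) := fun huv =>
    Or.imp ((linkedBy l).trans' huv) ((linkedBy l).trans' huv)
  induction h with
  | rel x y hxy =>
    obtain ⟨g, hg, rfl⟩ := hxy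
    rcases List.mem_cons.1 hg with rfl | hg
    · by_cases hxa : x = a
      · subst hxa
        rw [swap_apply_left]
        exact Or.inr ⟨Or.inl ((linkedBy l).refl' x), Or.inr ((linkedBy l).refl' b)⟩
      by_cases hxb : x = b
      · subst hxb
        rw [swap_apply_right]
        exact Or.inr ⟨Or.inr ((linkedBy l).refl' x), Or.inl ((linkedBy l).refl' a)⟩
      rw [swap_apply_of_ne_of_ne hxa hxb]
      exact Or.inl ((linkedBy l).refl' x)
    · exact Or.inl (linkedBy_apply hg x)
  | refl x => exact Or.inl ((linkedBy l).refl' x)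
  | symm x y _ ih => exact ih.imp (linkedBy l).symm' And.symm
  | trans x y z _ _ ihxy ihyz =>
    rcases ihxy with hxy | ⟨hx, hy⟩ <;> rcases ihyz with hyz | ⟨hy', hz⟩
    · exact Or.inl ((linkedBy l).trans' hxy hyz)
    · exact Or.inr ⟨hnear hxy hy', hz⟩
    · exact Or.inr ⟨hx, hnear ((linkedBy l).symm' hyz) hy⟩
    · exact Or.inr ⟨hx, hz⟩

theorem linkedBy_cons_swap_left : linkedBy (swap a b :: l) a b := by
  simpa using linkedBy_apply (l := swap a b :: l) List.mem_cons_self a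

theorem classCount_linkedBy_cons_swap {S : Set α} (hS : S.Finite) (ha : a ∈ S) (hb : b ∈ S) :
    (linkedBy l).classCount S + (linkedBy (swap a b :: l)).classCount {a, b} =
      (linkedBy (swap a b :: l)).classCount S + (linkedBy l).classCount {a, b} := by
  have hagree : ∀ x, ¬linkedBy l x a → ¬linkedBy l x b →
      ∀ y, linkedBy l x y ↔ linkedBy (swap a b :: l) x y := fun x hxa hxb y =>
    ⟨fun h => linkedBy_mono (List.subset_cons_self _ l) h,
      fun h => (linkedBy_cons_swap h).resolve_right fun h' => h'.1.elim hxa hxb⟩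
  refine Setoid.classCount_add_classCount_pair_eq hS ha hb hagree fun x hxa hxb => ?_
  have hsub := linkedBy_mono (l := l) (List.subset_cons_self (swap a b) l)
  exact hagree x (fun h => hxa (hsub h)) fun h => hxb (hsub h)

end linkedBy

section Counting

variable [DecidableEq α]

theorem ncard_add_classCount_sameCycle_le {S : Set α} (hS : S.Finite) (l : List (Perm α))
    (hl : ∀ g ∈ l, g.IsSwap ∧ {x | g x ≠ x} ⊆ S) :
    S.ncard + (SameCycle.setoid l.prod).classCount S ≤
      l.length + 2 * (linkedBy l).classCount S := by
  induction l with
  | nil =>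
    rw [Setoid.classCount_eq_ncard fun x y => eq_of_linkedBy_nil]
    have := (SameCycle.setoid (List.prod ([] : List (Perm α)))).classCount_le_ncard hS
    simp only [List.length_nil]
    omega
  | cons g l ih =>
    obtain ⟨⟨a, b, hab, rfl⟩, hsub⟩ := hl g List.mem_cons_self
    have ha : a ∈ S := hsub (by simpa using hab.symm)
    have hb : b ∈ S := hsub (by simpa using hab)
    have IH := ih fun g hg => hl g (List.mem_cons_of_mem _ hg)
    have hcyc := classCount_sameCycle_swap_mul (f := l.prod) hS ha hb
    have hlink := classCount_linkedBy_cons_swap (l := l) hS ha hb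
    rw [Setoid.classCount_pair_of_rel linkedBy_cons_swap_left] at hlink
    rw [List.prod_cons, List.length_cons]
    by_cases hab' : linkedBy l a b
    · rw [Setoid.classCount_pair_of_rel hab'] at hlink
      have := (SameCycle.setoid l.prod).one_le_classCount_pair (a := a) (b := b)
      have := (SameCycle.setoid (swap a b * l.prod)).classCount_pair_le_two (a := a) (b := b)
      omega
    · have hsep : ¬l.prod.SameCycle a b := fun h => hab' (linkedBy_of_sameCycle h)
      have hfin : {x | l.prod x ≠ x}.Finite :=
        hS.subset (support_prod_subset fun g hg => (hl g (List.mem_cons_of_mem _ hg)).2)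
      rw [Setoid.classCount_pair_of_not_rel hab'] at hlink
      rw [Setoid.classCount_pair_of_not_rel (r := SameCycle.setoid l.prod) hsep,
        Setoid.classCount_pair_of_rel (sameCycle_swap_mul_of_not_sameCycle hfin hsep)] at hcyc
      omega

theorem ncard_le_length_add_classCount_sameCycle (l : List (Perm α)) (hl : ∀ g ∈ l, g.IsSwap)
    {S : Set α} (hS : S.Finite) (hsupp : {x | l.prod x ≠ x} ⊆ S) :
    S.ncard ≤ l.length + (SameCycle.setoid l.prod).classCount S := by
  induction l generalizing S with
  | nil =>
    rw [Setoid.classCount_eq_ncard fun x y => sameCycle_one.1]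
    omega
  | cons g l ih =>
    obtain ⟨a, b, -, rfl⟩ := hl g List.mem_cons_self
    rw [List.prod_cons] at hsupp ⊢
    have hsupp' : {x | l.prod x ≠ x} ⊆ insert a (insert b S) := by
      rw [← swap_mul_self_mul a b l.prod]
      refine (support_mul_subset _ _).trans (Set.union_subset ?_ (hsupp.trans ?_))
      · intro x hx
        rcases (swap_apply_ne_self_iff.1 hx).2 with rfl | rfl <;> simp
      · exact (Set.subset_insert _ _).trans (Set.subset_insert _ _)
    have IH := ih (fun g hg => hl g (List.mem_cons_of_mem _ hg)) ((hS.insert b).insert a) hsupp'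
    have hcyc := classCount_sameCycle_swap_mul (f := l.prod) ((hS.insert b).insert a)
      (Set.mem_insert a _) (Set.mem_insert_of_mem a (Set.mem_insert b S))
    have hb := ncard_insert_add_classCount_sameCycle hS hsupp b
    have ha := ncard_insert_add_classCount_sameCycle (hS.insert b)
      (hsupp.trans (Set.subset_insert b S)) a
    have := (SameCycle.setoid (swap a b * l.prod)).one_le_classCount_pair (a := a) (b := b)
    have := (SameCycle.setoid l.prod).classCount_pair_le_two (a := a) (b := b)
    rw [List.length_cons]
    omega

end Counting

theorem ncard_le_cayleyDist_add_classCount_sameCycle {τ : Perm ℕ}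
    (hτ : ∃ l : List (Perm ℕ), (∀ g ∈ l, g.IsSwap) ∧ l.prod = τ) {S : Set ℕ} (hS : S.Finite)
    (hsupp : {x | τ x ≠ x} ⊆ S) :
    S.ncard ≤ cayleyDist τ + (SameCycle.setoid τ).classCount S := by
  obtain ⟨l₀, hl₀, hτ₀⟩ := hτ
  obtain ⟨l, hlen, hl, rfl⟩ := Nat.sInf_mem (s := {m | ∃ l : List (Perm ℕ), l.length = m ∧
    (∀ g ∈ l, ∃ a b, a ≠ b ∧ g = swap a b) ∧ l.prod = τ}) ⟨_, l₀, rfl, hl₀, hτ₀⟩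
  rw [cayleyDist, ← hlen]
  exact ncard_le_length_add_classCount_sameCycle l hl hS hsupp

theorem Equiv.Perm.IsCycle.exists_swap_factors [DecidableEq α] {f : Perm α} (hf : f.IsCycle)
    (hfin : {x | f x ≠ x}.Finite) :
    ∃ l : List (Perm α), l.prod = f ∧ (∀ g ∈ l, g.IsSwap ∧ {x | g x ≠ x} ⊆ {x | f x ≠ x}) ∧
      l.length + 1 = {x | f x ≠ x}.ncard ∧
      ∀ x ∈ {x | f x ≠ x}, ∀ y ∈ {x | f x ≠ x}, linkedBy l x y := by
  induction hn : {x | f x ≠ x}.ncard using Nat.strong_induction_on generalizing f with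
  | _ n ih =>
    obtain ⟨a, ha, -⟩ := id hf
    set b := f a
    have hab : a ≠ b := fun h => ha h.symm
    have hb : f b ≠ b := fun h => ha (f.injective h)
    have hswap_supp : {x | swap a b x ≠ x} = {a, b} := by
      ext x; simp [swap_apply_ne_self_iff, hab]
    have hab_supp : {a, b} ⊆ {x | f x ≠ x} := by
      rintro x (rfl | rfl)
      exacts [ha, hb]
    by_cases hba : f b = a
    · have hf_eq : f = swap a b := hf.eq_swap_of_apply_apply_eq_self ha hba
      refine ⟨[swap a b], by simp [hf_eq], ?_,
        by rw [← hn, hf_eq, hswap_supp, Set.ncard_pair hab]; rfl, ?_⟩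
      · simp only [List.mem_singleton, forall_eq, hswap_supp]
        exact ⟨⟨a, b, hab, rfl⟩, hab_supp⟩
      rw [hf_eq, hswap_supp]
      have hlink := linkedBy_cons_swap_left (a := a) (b := b) (l := [])
      rintro x (rfl | rfl) y (rfl | rfl)
      exacts [Setoid.refl' _ _, hlink, Setoid.symm' _ hlink, Setoid.refl' _ _]
    have hsupp : {x | (swap a b * f) x ≠ x} = {x | f x ≠ x} \ {a} := by
      ext x
      simp only [Set.mem_ofPred_eq, Set.mem_sdiff, Set.mem_singleton_iff, mul_apply, ne_eq,
        swap_apply_eq_iff]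
      by_cases hxa : x = a
      · simp [hxa, b]
      by_cases hxb : x = b
      · simp [hxb, hba, hab.symm, hb]
      simp [swap_apply_of_ne_of_ne hxa hxb, hxa]
    obtain ⟨l, hprod, hswap, hlen, hlink⟩ := ih (n - 1) (by
        have := Set.ncard_pos hfin |>.2 ⟨a, ha⟩; omega) (hf.swap_mul ha hba) (hsupp ▸ hfin.sdiff)
      (by rw [hsupp, Set.ncard_sdiff_singleton_of_mem ha, hn])
    refine ⟨swap a b :: l, by rw [List.prod_cons, hprod, swap_mul_self_mul], ?_, ?_, ?_⟩
    · intro g hg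
      rcases List.mem_cons.1 hg with rfl | hg
      · exact ⟨⟨a, b, hab, rfl⟩, hswap_supp ▸ hab_supp⟩
      · exact ⟨(hswap g hg).1, (hswap g hg).2.trans (hsupp ▸ Set.sdiff_subset)⟩
    · rw [List.length_cons]; omega
    have hb' : b ∈ {x | (swap a b * f) x ≠ x} := by rw [hsupp]; exact ⟨hb, hab.symm⟩
    have hlink_b : ∀ x ∈ {x | f x ≠ x}, linkedBy (swap a b :: l) x b := by
      intro x hx
      by_cases hxa : x = a
      · exact hxa ▸ linkedBy_cons_swap_left
      · exact linkedBy_mono (List.subset_cons_self _ l)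
          (hlink x (by rw [hsupp]; exact ⟨hx, hxa⟩) b hb')
    exact fun x hx y hy => Setoid.trans' _ (hlink_b x hx) (Setoid.symm' _ (hlink_b y hy))

theorem SimpleGraph.Preconnected.rel_of_mem_iUnion {ι : Type*} {G : SimpleGraph ι}
    (hG : G.Preconnected) {s : ι → Set α} {r : Setoid α}
    (hadj : ∀ i j, G.Adj i j → (s i ∩ s j).Nonempty) (hs : ∀ i, ∀ x ∈ s i, ∀ y ∈ s i, r x y) :
    ∀ x ∈ ⋃ i, s i, ∀ y ∈ ⋃ i, s i, r x y := by
  have hwalk : ∀ i j, G.Walk i j → ∀ x ∈ s i, ∀ y ∈ s j, r x y := by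
    intro i j w
    induction w with
    | nil => exact hs _
    | cons huv _ ih =>
      intro x hx y hy
      obtain ⟨z, hzu, hzv⟩ := hadj _ _ huv
      exact r.trans' (hs _ x hx z hzu) (ih z hzv y hy)
  intro x hx y hy
  obtain ⟨i, hx⟩ := Set.mem_iUnion.1 hx
  obtain ⟨j, hy⟩ := Set.mem_iUnion.1 hy
  exact hwalk i j (hG i j).some x hx y hy

theorem exists_swap_factors_prod_ofFn [DecidableEq α] {r : ℕ} (σ : Fin r → Perm α)
    (hcyc : ∀ j, (σ j).IsCycle) (hfin : ∀ j, {x | σ j x ≠ x}.Finite) :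
    ∃ L : List (Perm α), L.prod = (List.ofFn σ).prod ∧
      (∀ g ∈ L, g.IsSwap ∧ {x | g x ≠ x} ⊆ ⋃ j, {x | σ j x ≠ x}) ∧
      L.length + r = ∑ j, {x | σ j x ≠ x}.ncard ∧
      ∀ j, ∀ x ∈ {x | σ j x ≠ x}, ∀ y ∈ {x | σ j x ≠ x}, linkedBy L x y := by
  choose l hprod hswap hlen hlink using fun j => (hcyc j).exists_swap_factors (hfin j)
  have hlL : ∀ j, l j ⊆ (List.ofFn l).flatten := fun j g hg =>
    List.mem_flatten.2 ⟨l j, List.mem_ofFn.2 ⟨j, rfl⟩, hg⟩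
  refine ⟨(List.ofFn l).flatten, ?_, fun g hg => ?_, ?_,
    fun j x hx y hy => linkedBy_mono (hlL j) (hlink j x hx y hy)⟩
  · simp only [List.prod_flatten, List.map_ofFn, Function.comp_def, hprod]
  · obtain ⟨_, hlj, hg⟩ := List.mem_flatten.1 hg
    obtain ⟨j, rfl⟩ := List.mem_ofFn.1 hlj
    exact ⟨(hswap j g hg).1,
      (hswap j g hg).2.trans (Set.subset_iUnion (fun j => {x | σ j x ≠ x}) j)⟩
  · simp only [List.length_flatten, List.map_ofFn, List.sum_ofFn, Function.comp_def, ← hlen,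
      Finset.sum_add_distrib, Finset.sum_const, Finset.card_univ, Fintype.card_fin, smul_eq_mul,
      mul_one]

theorem stmt5_general (r : ℕ) (σ : Fin r → Equiv.Perm ℕ) (k : Fin r → ℕ)
    (hcyc : ∀ j, (σ j).IsCycle)
    (hfin : ∀ j, {x | σ j x ≠ x}.Finite)
    (hsupp : ∀ j, Set.ncard {x | σ j x ≠ x} = k j)
    (hconn : (intersectGraph σ).Connected) :
    2 * (Set.ncard (⋃ j, {x | σ j x ≠ x}) : ℤ) ≤
      (cayleyDist (List.ofFn σ).prod : ℤ) - (r : ℤ) + (∑ j, (k j : ℤ)) + 2 := by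
  obtain ⟨L, hprod, hswap, hlen, hlink⟩ := exists_swap_factors_prod_ofFn σ hcyc hfin
  have hUfin : (⋃ j, {x | σ j x ≠ x}).Finite := Set.finite_iUnion hfin
  have hcomp : (linkedBy L).classCount (⋃ j, {x | σ j x ≠ x}) ≤ 1 := by
    refine Setoid.classCount_le_one hUfin (hconn.preconnected.rel_of_mem_iUnion ?_ hlink)
    intro i j hij
    rcases ((SimpleGraph.fromRel_adj _ _ _).1 hij).2 with h | h
    exacts [h, Set.inter_comm _ _ ▸ h]
  have hcycles := ncard_add_classCount_sameCycle_le hUfin L hswap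
  have hcayley := ncard_le_cayleyDist_add_classCount_sameCycle ⟨L, fun g hg => (hswap g hg).1, rfl⟩
    hUfin (support_prod_subset fun g hg => (hswap g hg).2)
  rw [hprod] at hcycles hcayley
  simp only [hsupp] at hlen
  have hsum : ∑ j, (k j : ℤ) = ((∑ j, k j : ℕ) : ℤ) := by push_cast; rfl
  omega

/-- For jointly intersecting cycles `σ₁,…,σ_r` of lengths `k₁,…,k_r ≥ 2`,
`2·|supp(σ₁) ∪ ⋯ ∪ supp(σ_r)| ≤ |σ₁⋯σ_r| − r + (k₁+⋯+k_r) + 2`. -/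
theorem stmt5 (r : ℕ) (hr : 1 ≤ r) (σ : Fin r → Equiv.Perm ℕ) (k : Fin r → ℕ)
    (hk : ∀ j, 2 ≤ k j) (hcyc : ∀ j, (σ j).IsCycle)
    (hfin : ∀ j, {x | σ j x ≠ x}.Finite)
    (hsupp : ∀ j, Set.ncard {x | σ j x ≠ x} = k j)
    (hconn : (intersectGraph σ).Connected) :
    2 * (Set.ncard (⋃ j, {x | σ j x ≠ x}) : ℤ) ≤
      (cayleyDist (List.ofFn σ).prod : ℤ) - (r : ℤ) + (∑ j, (k j : ℤ)) + 2 :=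
  stmt5_general r σ k hcyc hfin hsupp hconn
end

section
/- Let r ≥ 1 and let σ_1,…,σ_r be finitely supported permutations of ℕ, each different from the identity. Assume the family jointly intersects: the graph on {1,…,r} in which j and j′ are adjacent whenever the supports of σ_j and σ_{j′} intersect is connected. Then 2·|supp(σ_1) ∪ ⋯ ∪ supp(σ_r)| ≤ |σ_1σ_2⋯σ_r| + Σ_{j=1}^r |supp(σ_j)| + Σ_{j=1}^r c(σ_j) + 2 − 2r, where c(σ_j) denotes the number of nontrivial cycles of σ_j and |τ| denotes the Cayley distance of a finitely supported permutation τ. -/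
/-- The number of nontrivial cycles of a permutation of `ℕ`, counted as the number of
orbits (same-cycle classes) containing a moved point. -/
noncomputable def numCycles (σ : Equiv.Perm ℕ) : ℕ :=
  Nat.card {S : Set ℕ // ∃ x, σ x ≠ x ∧ S = {y | σ.SameCycle x y}}

/-!
Write `‖ρ‖ = |supp ρ| - c(ρ)` (`cycleDefect`). Factor each `σ_j` into `‖σ_j‖` transpositions
and concatenate the factorizations into a list `l` of transpositions with product
`π = σ_1 ⋯ σ_r`. Adding the transpositions one at a time gives the genus inequality
`2 (|W| - #orbits of ⟨l⟩ meeting W) ≤ length l + ‖π‖`: a transposition joining two orbits of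
the group also joins two cycles of the product and raises `‖·‖` by one, while any transposition
changes `‖·‖` by at most one. Since `‖π‖ ≤ |π|`, it remains to count the orbits meeting
`U = ⋃ supp σ_j`: `supp σ_j` meets at most `c(σ_j)` of them, and adding the `σ_j` along the
connected intersection graph, each new support meets an earlier one, so at most
`Σ c(σ_j) - r + 1` orbits meet `U`.
-/

open Equiv Equiv.Perm MulAction Function Set

namespace Setoid

variable {α β : Type*} {s t : Setoid α} {W W' : Set α}

noncomputable def numClassesOn (s : Setoid α) (W : Set α) : ℕ := (Quotient.mk s '' W).ncard

theorem numClassesOn_ker (f : α → β) (W : Set α) :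
    (ker f).numClassesOn W = (f '' W).ncard := by
  rw [numClassesOn, ← ncard_image_of_injective _ (kerLift_injective f), image_image]
  rfl

theorem numClassesOn_eq_ncard (h : ∀ x y, s x y → x = y) (W : Set α) :
    s.numClassesOn W = W.ncard :=
  ncard_image_of_injective _ fun x y hxy => h x y (Quotient.exact hxy)

theorem image_mk_eq_image_map_of_le (h : s ≤ t) (W : Set α) :
    Quotient.mk t '' W = map_of_le h '' (Quotient.mk s '' W) := by
  rw [image_image]
  rfl

theorem numClassesOn_le_of_le (h : s ≤ t) (hW : W.Finite) :
    t.numClassesOn W ≤ s.numClassesOn W := by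
  rw [numClassesOn, image_mk_eq_image_map_of_le h]
  exact ncard_image_le (hW.image _)

theorem numClassesOn_lt_of_le (h : s ≤ t) (hW : W.Finite) {a b : α} (ha : a ∈ W) (hb : b ∈ W)
    (htab : t a b) (hsab : ¬ s a b) : t.numClassesOn W < s.numClassesOn W := by
  rw [numClassesOn, image_mk_eq_image_map_of_le h]
  refine (ncard_image_le (hW.image _)).lt_of_ne fun heq => hsab ?_
  exact Quotient.exact <| (ncard_image_iff (hW.image _)).mp heq (mem_image_of_mem _ ha)
    (mem_image_of_mem _ hb) (Quotient.sound htab)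

theorem numClassesOn_union_add_one_le (hW : W.Finite) (hW' : W'.Finite)
    (hWW' : (W ∩ W').Nonempty) :
    s.numClassesOn (W ∪ W') + 1 ≤ s.numClassesOn W + s.numClassesOn W' := by
  obtain ⟨x, hx, hx'⟩ := hWW'
  have hinter : 0 < (Quotient.mk s '' W ∩ Quotient.mk s '' W').ncard :=
    (ncard_pos ((hW.image _).inter_of_left _)).mpr
      ⟨_, mem_image_of_mem _ hx, mem_image_of_mem _ hx'⟩
  have := ncard_union_add_ncard_inter _ _ (hW.image (Quotient.mk s)) (hW'.image (Quotient.mk s))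
  rw [numClassesOn, numClassesOn, numClassesOn, image_union]
  omega

theorem numClassesOn_eq_add_ncard_sdiff {M : Set α} (hMW : M ⊆ W) (hW : W.Finite)
    (hsingle : ∀ x ∈ W \ M, ∀ y, s y x → y = x) :
    s.numClassesOn W = s.numClassesOn M + (W \ M).ncard := by
  have hsplit : Quotient.mk s '' W = Quotient.mk s '' M ∪ Quotient.mk s '' (W \ M) := by
    rw [← image_union, union_sdiff_cancel hMW]
  have hdisj : Disjoint (Quotient.mk s '' M) (Quotient.mk s '' (W \ M)) := by
    rw [disjoint_left]
    rintro _ ⟨y, hy, rfl⟩ ⟨x, hx, hxy⟩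
    exact hx.2 (hsingle x hx y (Quotient.exact hxy.symm) ▸ hy)
  have hinj : InjOn (Quotient.mk s) (W \ M) := fun x hx _ _ h =>
    (hsingle x hx _ (Quotient.exact h.symm)).symm
  rw [numClassesOn, hsplit, ncard_union_eq hdisj ((hW.subset hMW).image _) (hW.sdiff.image _),
    hinj.ncard_image, numClassesOn]

theorem rel_swap_apply [DecidableEq α] {a b : α} (h : t a b) (x : α) : t (swap a b x) x := by
  rcases eq_or_ne x a with rfl | hxa
  · rw [swap_apply_left]
    exact t.symm' h
  rcases eq_or_ne x b with rfl | hxb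
  · rw [swap_apply_right]
    exact h
  rw [swap_apply_of_ne_of_ne hxa hxb]

/-- The classes of `a` and `b` merged into one, encoded as the kernel of the map sending the
class of `b` to that of `a`. -/
noncomputable def merge (s : Setoid α) (a b : α) : Setoid α :=
  open Classical in ker fun x => if s x b then Quotient.mk s a else Quotient.mk s x

theorem le_merge (a b : α) : s ≤ s.merge a b := by
  intro x y hxy
  have hb : s x b ↔ s y b := ⟨s.trans' (s.symm' hxy), s.trans' hxy⟩
  unfold merge
  rw [ker_def]
  by_cases hx : s x b
  · simp [hx, hb.mp hx]
  · simp [hx, mt hb.mpr hx, Quotient.sound hxy]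

theorem merge_rel (a b : α) : s.merge a b a b := by
  unfold merge
  rw [ker_def]
  simp

theorem numClassesOn_le_merge_add_one (a b : α) (hW : W.Finite) :
    s.numClassesOn W ≤ (s.merge a b).numClassesOn W + 1 := by
  classical
  rw [merge, numClassesOn_ker]
  have hsub : Quotient.mk s '' W \ {Quotient.mk s b} ⊆
      (fun x => if s x b then Quotient.mk s a else Quotient.mk s x) '' W := by
    rintro _ ⟨⟨x, hx, rfl⟩, hxb⟩
    have : ¬ s x b := fun h => hxb (Quotient.sound h)
    exact ⟨x, hx, by simp [this]⟩
  have := pred_ncard_le_ncard_sdiff_singleton (Quotient.mk s '' W) (Quotient.mk s b)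
  have := ncard_le_ncard hsub (hW.image _)
  rw [numClassesOn]
  omega

end Setoid

namespace Equiv.Perm

variable {α : Type*} {t : Setoid α}

theorem orbitRel_closure_le {S : Set (Perm α)} (h : ∀ g ∈ S, ∀ x, t (g x) x) :
    orbitRel (Subgroup.closure S) α ≤ t := by
  rintro _ y ⟨⟨g, hg⟩, rfl⟩
  show t (g y) y
  refine Subgroup.closure_induction (p := fun g _ => ∀ x, t (g x) x) h (fun x => t.refl' x)
    ?_ ?_ hg y
  · intro g k _ _ hg hk x
    exact t.trans' (hg (k x)) (hk x)
  · intro g _ hg x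
    simpa using t.symm' (hg (g⁻¹ x))

theorem orbitRel_closure_apply {S : Set (Perm α)} {g : Perm α} (hg : g ∈ Subgroup.closure S)
    (x : α) : orbitRel (Subgroup.closure S) α (g x) x :=
  ⟨⟨g, hg⟩, rfl⟩

theorem sameCycle_setoid_le {ρ : Perm α} (h : ∀ x, t (ρ x) x) : SameCycle.setoid ρ ≤ t := by
  rintro x _ ⟨i, rfl⟩
  have hρ : ρ ∈ Subgroup.closure {ρ} := Subgroup.mem_closure_singleton_self ρ
  exact t.symm' (orbitRel_closure_le (by simpa using h) (orbitRel_closure_apply (zpow_mem hρ i) x))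

theorem sameCycle_setoid_le_orbitRel {S : Set (Perm α)} {ρ : Perm α}
    (hρ : ρ ∈ Subgroup.closure S) : SameCycle.setoid ρ ≤ orbitRel (Subgroup.closure S) α :=
  sameCycle_setoid_le (orbitRel_closure_apply hρ)

theorem orbitRel_closure_cons_swap_le [DecidableEq α] {l : List (Perm α)} {a b : α}
    (hl : orbitRel (Subgroup.closure {g | g ∈ l}) α ≤ t) (hab : t a b) :
    orbitRel (Subgroup.closure {g | g ∈ swap a b :: l}) α ≤ t := by
  refine orbitRel_closure_le fun g hg => ?_
  rcases List.mem_cons.mp hg with rfl | hg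
  · exact Setoid.rel_swap_apply hab
  · exact fun x => Setoid.le_def.mp hl (orbitRel_closure_apply (Subgroup.subset_closure hg) x)

def movedPoints (ρ : Perm α) : Set α := {x | ρ x ≠ x}

theorem movedPoints_mul_subset (f g : Perm α) :
    movedPoints (f * g) ⊆ movedPoints f ∪ movedPoints g := by
  intro x hx
  by_contra h
  rw [mem_union, not_or] at h
  exact hx (by rw [mul_apply, not_not.mp h.2, not_not.mp h.1])

theorem movedPoints_swap_subset [DecidableEq α] (a b : α) : movedPoints (swap a b) ⊆ {a, b} :=
  fun _ hx => (swap_apply_ne_self_iff.mp hx).2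

theorem finite_movedPoints_prod [DecidableEq α] {l : List (Perm α)} (hl : ∀ g ∈ l, g.IsSwap) :
    (movedPoints l.prod).Finite := by
  induction l with
  | nil => simp [movedPoints]
  | cons g l ih =>
    obtain ⟨a, b, -, rfl⟩ := hl g List.mem_cons_self
    refine (((toFinite {a, b}).subset (movedPoints_swap_subset a b)).union
      (ih fun g hg => hl g (List.mem_cons_of_mem _ hg))).subset ?_
    rw [List.prod_cons]
    exact movedPoints_mul_subset _ _

theorem mem_periodicPts_of_finite {ρ : Perm α} (hρ : (movedPoints ρ).Finite) (x : α) :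
    x ∈ periodicPts ρ := by
  have hmaps : MapsTo ρ (insert x (movedPoints ρ)) (insert x (movedPoints ρ)) := by
    intro y hy'
    by_cases hy : ρ y = y
    · rwa [hy]
    · exact Or.inr fun h => hy (ρ.injective h)
  obtain ⟨m, n, hmn, hmn'⟩ := hρ.insert x |>.exists_lt_map_eq_of_forall_mem
    (f := fun n => ρ^[n] x) fun n => hmaps.iterate n (mem_insert x _)
  refine mk_mem_periodicPts (Nat.sub_pos_of_lt hmn) (ρ.injective.iterate m ?_)
  rw [← iterate_add_apply, Nat.add_sub_cancel' hmn.le]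
  exact hmn'.symm

/-- Before returning to `b`, the `ρ`-orbit of `b` avoids `a`, so `swap a b * ρ` follows it
and then sends `b` to `a`. -/
theorem sameCycle_swap_mul_of_not_sameCycle_s6 [DecidableEq α] {ρ : Perm α}
    (hρ : (movedPoints ρ).Finite) {a b : α} (hab : ¬ ρ.SameCycle a b) :
    (swap a b * ρ).SameCycle a b := by
  set n := minimalPeriod ρ b
  have hn : 0 < n := minimalPeriod_pos_of_mem_periodicPts (mem_periodicPts_of_finite hρ b)
  have hfollow : ∀ k < n, (swap a b * ρ)^[k] b = ρ^[k] b := by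
    intro k
    induction k with
    | zero => simp
    | succ k ih =>
      intro hk
      have hne_a : ρ^[k + 1] b ≠ a := fun h =>
        hab (SameCycle.symm ⟨(k + 1 : ℕ), by rw [zpow_natCast, coe_pow, h]⟩)
      have hne_b : ρ^[k + 1] b ≠ b :=
        not_isPeriodicPt_of_pos_of_lt_minimalPeriod k.succ_ne_zero hk
      rw [iterate_succ_apply', ih (by omega), coe_mul, comp_apply, ← iterate_succ_apply' ρ,
        swap_apply_of_ne_of_ne hne_a hne_b]
  have hreturn : (swap a b * ρ)^[n] b = a := by
    obtain ⟨k, hk⟩ : ∃ k, n = k + 1 := ⟨n - 1, by omega⟩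
    rw [hk, iterate_succ_apply', hfollow k (by omega), coe_mul, comp_apply,
      ← iterate_succ_apply' ρ, Nat.succ_eq_add_one, ← hk, iterate_minimalPeriod,
      swap_apply_right]
  exact SameCycle.symm ⟨n, by rw [zpow_natCast, coe_pow, hreturn]⟩

end Equiv.Perm

open Setoid

noncomputable def cycleDefect (ρ : Perm ℕ) : ℤ := (movedPoints ρ).ncard - numCycles ρ

theorem numCycles_eq_numClassesOn (ρ : Perm ℕ) :
    numCycles ρ = (SameCycle.setoid ρ).numClassesOn (movedPoints ρ) := by
  have hker : ker (fun x => {y | ρ.SameCycle x y}) = SameCycle.setoid ρ := by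
    ext x y
    rw [ker_def]
    refine ⟨fun h => ?_, fun h => Set.ext fun z => ⟨(SameCycle.symm h).trans, h.trans⟩⟩
    have hy : y ∈ {z | ρ.SameCycle y z} := SameCycle.refl ρ y
    rwa [← h] at hy
  rw [numCycles, ← hker, numClassesOn_ker, ← Nat.card_coe_set_eq]
  congr 2
  ext S
  exact exists_congr fun x => and_congr_right fun _ => eq_comm

theorem cycleDefect_eq_of_subset {ρ : Perm ℕ} {W : Set ℕ} (hW : W.Finite)
    (hρW : movedPoints ρ ⊆ W) :
    cycleDefect ρ = W.ncard - (SameCycle.setoid ρ).numClassesOn W := by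
  have hsingle : ∀ x ∈ W \ movedPoints ρ, ∀ y, SameCycle.setoid ρ y x → y = x := by
    rintro x ⟨-, hx⟩ y hxy
    obtain ⟨i, rfl⟩ := SameCycle.symm hxy
    exact zpow_apply_eq_self_of_apply_eq_self (not_not.mp hx) i
  rw [cycleDefect, numCycles_eq_numClassesOn, numClassesOn_eq_add_ncard_sdiff hρW hW hsingle,
    ← ncard_sdiff_add_ncard_of_subset hρW hW]
  push_cast
  ring

theorem cycleDefect_one : cycleDefect 1 = 0 := by
  simp [cycleDefect, numCycles, movedPoints]

theorem movedPoints_swap_mul_subset (ρ : Perm ℕ) (a b : ℕ) :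
    movedPoints (swap a b * ρ) ⊆ movedPoints ρ ∪ {a, b} :=
  (movedPoints_mul_subset _ _).trans (union_comm _ _ ▸
    union_subset_union_right _ (movedPoints_swap_subset a b))

theorem cycleDefect_swap_mul_le {ρ : Perm ℕ} (hρ : (movedPoints ρ).Finite) (a b : ℕ) :
    cycleDefect (swap a b * ρ) ≤ cycleDefect ρ + 1 := by
  have hW : (movedPoints ρ ∪ {a, b}).Finite := hρ.union (toFinite _)
  have hle : SameCycle.setoid (swap a b * ρ) ≤ (SameCycle.setoid ρ).merge a b :=
    sameCycle_setoid_le fun x => ((SameCycle.setoid ρ).merge a b).trans'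
      (rel_swap_apply (merge_rel a b) (ρ x))
      (le_merge a b (sameCycle_apply_left.mpr (SameCycle.refl ρ x)))
  rw [cycleDefect_eq_of_subset hW (movedPoints_swap_mul_subset ρ a b),
    cycleDefect_eq_of_subset hW subset_union_left]
  have := numClassesOn_le_of_le hle hW
  have := numClassesOn_le_merge_add_one (s := SameCycle.setoid ρ) a b hW
  omega

theorem cycleDefect_le_swap_mul {ρ : Perm ℕ} (hρ : (movedPoints ρ).Finite) (a b : ℕ) :
    cycleDefect ρ ≤ cycleDefect (swap a b * ρ) + 1 := by
  have hρ' : (movedPoints (swap a b * ρ)).Finite :=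
    (hρ.union (toFinite _)).subset (movedPoints_swap_mul_subset ρ a b)
  simpa only [swap_mul_self_mul] using cycleDefect_swap_mul_le hρ' a b

theorem cycleDefect_lt_swap_mul {ρ : Perm ℕ} (hρ : (movedPoints ρ).Finite) {a b : ℕ}
    (hab : ¬ ρ.SameCycle a b) : cycleDefect ρ < cycleDefect (swap a b * ρ) := by
  have hW : (movedPoints ρ ∪ {a, b}).Finite := hρ.union (toFinite _)
  have hjoin := sameCycle_swap_mul_of_not_sameCycle_s6 hρ hab
  have hle : SameCycle.setoid ρ ≤ SameCycle.setoid (swap a b * ρ) :=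
    sameCycle_setoid_le fun x =>
      (SameCycle.symm (rel_swap_apply (t := SameCycle.setoid _) hjoin (ρ x))).trans
        (sameCycle_apply_left.mpr (SameCycle.refl _ x))
  rw [cycleDefect_eq_of_subset hW (movedPoints_swap_mul_subset ρ a b),
    cycleDefect_eq_of_subset hW subset_union_left]
  have := numClassesOn_lt_of_le hle hW (by simp) (by simp) hjoin hab
  omega

theorem exists_swap_factorization {ρ : Perm ℕ} (hρ : (movedPoints ρ).Finite) :
    ∃ l : List (Perm ℕ), (∀ g ∈ l, g.IsSwap) ∧ l.prod = ρ ∧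
      (l.length : ℤ) ≤ cycleDefect ρ := by
  induction h : (movedPoints ρ).ncard using Nat.strong_induction_on generalizing ρ with
  | _ n ih =>
  by_cases hρ1 : ρ = 1
  · exact ⟨[], by simp, by simp [hρ1], by simp [hρ1, cycleDefect_one]⟩
  obtain ⟨x, hx⟩ : ∃ x, ρ x ≠ x := not_forall.mp fun h => hρ1 (Equiv.ext h)
  have hρx : ρ x ∈ movedPoints ρ := fun h => hx (ρ.injective h)
  set ρ' := swap x (ρ x) * ρ
  have hx' : ρ' x = x := by simp [ρ']
  have hsub : movedPoints ρ' ⊂ movedPoints ρ := by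
    refine (ssubset_iff_of_subset ((movedPoints_swap_mul_subset ρ _ _).trans ?_)).mpr
      ⟨x, hx, fun h => h hx'⟩
    exact union_subset subset_rfl (insert_subset hx (singleton_subset_iff.mpr hρx))
  have hρ' : (movedPoints ρ').Finite := hρ.subset hsub.subset
  obtain ⟨l, hl, hlρ, hllen⟩ := ih _ (h ▸ ncard_lt_ncard hsub hρ) hρ' rfl
  have hsplit : ¬ ρ'.SameCycle x (ρ x) := by
    rintro ⟨i, hi⟩
    exact hx (zpow_apply_eq_self_of_apply_eq_self hx' i ▸ hi).symm
  have hdefect := cycleDefect_lt_swap_mul hρ' hsplit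
  rw [swap_mul_self_mul] at hdefect
  refine ⟨swap x (ρ x) :: l, ?_, by rw [List.prod_cons, hlρ, swap_mul_self_mul], ?_⟩
  · intro g hg
    rcases List.mem_cons.mp hg with rfl | hg
    exacts [⟨x, ρ x, hx.symm, rfl⟩, hl g hg]
  · simp only [List.length_cons]
    push_cast
    omega

theorem cycleDefect_prod_le_length {l : List (Perm ℕ)} (hl : ∀ g ∈ l, g.IsSwap) :
    cycleDefect l.prod ≤ l.length := by
  induction l with
  | nil => simp [cycleDefect_one]
  | cons g l ih =>
    obtain ⟨a, b, -, rfl⟩ := hl g List.mem_cons_self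
    have hl' : ∀ g ∈ l, g.IsSwap := fun g hg => hl g (List.mem_cons_of_mem _ hg)
    have := cycleDefect_swap_mul_le (finite_movedPoints_prod hl') a b
    have := ih hl'
    rw [List.prod_cons, List.length_cons]
    push_cast
    omega

theorem cycleDefect_le_cayleyDist {ρ : Perm ℕ}
    (h : ∃ l : List (Perm ℕ), (∀ g ∈ l, g.IsSwap) ∧ l.prod = ρ) :
    cycleDefect ρ ≤ cayleyDist ρ := by
  obtain ⟨l, hlen, hl, rfl⟩ := Nat.sInf_mem (s := {m | ∃ l : List (Perm ℕ), l.length = m ∧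
    (∀ g ∈ l, ∃ a b, a ≠ b ∧ g = Equiv.swap a b) ∧ l.prod = ρ}) (by
      obtain ⟨l, hl⟩ := h
      exact ⟨_, l, rfl, hl⟩)
  rw [cayleyDist, ← hlen]
  exact cycleDefect_prod_le_length hl

theorem two_mul_ncard_sub_numClassesOn_le {W : Set ℕ} (hW : W.Finite) {l : List (Perm ℕ)}
    (hl : ∀ g ∈ l, g.IsSwap) :
    2 * ((W.ncard : ℤ) - (orbitRel (Subgroup.closure {g | g ∈ l}) ℕ).numClassesOn W) ≤
      l.length + cycleDefect l.prod := by
  induction l with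
  | nil =>
    have hbot : ∀ x y, orbitRel (Subgroup.closure {g | g ∈ ([] : List (Perm ℕ))}) ℕ x y →
        x = y :=
      fun x y => Setoid.le_def.mp (orbitRel_closure_le (t := ⊥) (by simp))
    simp [numClassesOn_eq_ncard hbot, cycleDefect_one]
  | cons g l ih =>
    obtain ⟨a, b, -, rfl⟩ := hl g List.mem_cons_self
    have hl' : ∀ g ∈ l, g.IsSwap := fun g hg => hl g (List.mem_cons_of_mem _ hg)
    have hρ := finite_movedPoints_prod hl'
    have hih := ih hl'
    rw [List.prod_cons, List.length_cons]
    by_cases hab : orbitRel (Subgroup.closure {g | g ∈ l}) ℕ a b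
    · have hclasses := numClassesOn_le_of_le
        (orbitRel_closure_cons_swap_le (l := l) le_rfl hab) hW
      have hdefect := cycleDefect_le_swap_mul hρ a b
      push_cast
      omega
    · have hmerge := numClassesOn_le_of_le
        (orbitRel_closure_cons_swap_le (l := l) (le_merge a b) (merge_rel a b)) hW
      have hclasses := numClassesOn_le_merge_add_one
        (s := orbitRel (Subgroup.closure {g | g ∈ l}) ℕ) a b hW
      have hdefect := cycleDefect_lt_swap_mul hρ fun h => hab (Setoid.le_def.mp
        (sameCycle_setoid_le_orbitRel (list_prod_mem fun g hg => Subgroup.subset_closure hg)) h)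
      push_cast
      omega

theorem SimpleGraph.Connected.induction_on_finset {V : Type*} [Fintype V] [DecidableEq V]
    {G : SimpleGraph V} (hG : G.Connected) {P : Finset V → Prop} (hsingleton : ∀ v, P {v})
    (hinsert : ∀ T u v, u ∈ T → v ∉ T → G.Adj u v → P T → P (insert v T)) :
    P Finset.univ := by
  obtain ⟨v₀⟩ := hG.nonempty
  refine Finset.strongDownwardInductionOn (p := fun T => T.Nonempty → P T → P Finset.univ)
    {v₀} (fun T ih _ => ?_) (Finset.card_le_univ _) (Finset.singleton_nonempty v₀)
    (hsingleton v₀)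
  rintro ⟨a, ha⟩ hT
  by_cases hTuniv : T = Finset.univ
  · exact hTuniv ▸ hT
  obtain ⟨b, -, hb⟩ := Finset.exists_of_ssubset (Finset.ssubset_univ_iff.mpr hTuniv)
  obtain ⟨d, -, hd, hd'⟩ := (hG.preconnected a b).some.exists_boundary_dart (T : Set V) ha hb
  exact ih (Finset.card_le_univ _) (Finset.ssubset_insert hd') (Finset.insert_nonempty _ _)
    (hinsert T d.fst d.snd hd hd' d.adj hT)

theorem numClassesOn_iUnion_add_le {r : ℕ} (σ : Fin r → Perm ℕ)
    (hfin : ∀ j, (movedPoints (σ j)).Finite) (hconn : (intersectGraph σ).Connected)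
    {t : Setoid ℕ} (ht : ∀ j, SameCycle.setoid (σ j) ≤ t) :
    t.numClassesOn (⋃ j, movedPoints (σ j)) + r ≤ ∑ j, numCycles (σ j) + 1 := by
  have hcycles : ∀ j, t.numClassesOn (movedPoints (σ j)) ≤ numCycles (σ j) := fun j =>
    numCycles_eq_numClassesOn (σ j) ▸ numClassesOn_le_of_le (ht j) (hfin j)
  have key := hconn.induction_on_finset
    (P := fun T => t.numClassesOn (⋃ j ∈ T, movedPoints (σ j)) + T.card ≤
      ∑ j ∈ T, numCycles (σ j) + 1) (fun v => by simpa using hcycles v) ?_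
  · simpa using key
  intro T u v hu hv hadj hT
  have hmeet : (movedPoints (σ v) ∩ ⋃ j ∈ T, movedPoints (σ j)).Nonempty := by
    rw [intersectGraph, SimpleGraph.fromRel_adj] at hadj
    rcases hadj.2 with ⟨x, hxu, hxv⟩ | ⟨x, hxv, hxu⟩ <;>
      exact ⟨x, hxv, mem_biUnion hu hxu⟩
  have hTfin : (⋃ j ∈ T, movedPoints (σ j)).Finite := T.finite_toSet.biUnion fun j _ => hfin j
  have := numClassesOn_union_add_one_le (s := t) (hfin v) hTfin hmeet
  have := hcycles v
  rw [Finset.set_biUnion_insert, Finset.card_insert_of_notMem hv, Finset.sum_insert hv]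
  omega

theorem exists_swap_factorization_ofFn {r : ℕ} (σ : Fin r → Perm ℕ)
    (hfin : ∀ j, (movedPoints (σ j)).Finite) :
    ∃ l : List (Perm ℕ), (∀ g ∈ l, g.IsSwap) ∧ l.prod = (List.ofFn σ).prod ∧
      (l.length : ℤ) ≤ ∑ j, cycleDefect (σ j) ∧
      ∀ j, σ j ∈ Subgroup.closure {g | g ∈ l} := by
  choose L hLswap hLprod hLlen using fun j => exists_swap_factorization (hfin j)
  have hmem : ∀ {g}, g ∈ (List.ofFn L).flatten ↔ ∃ j, g ∈ L j := by
    simp [List.mem_flatten, List.mem_ofFn]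
  refine ⟨(List.ofFn L).flatten, fun g hg => ?_, ?_, ?_, fun j => ?_⟩
  · obtain ⟨j, hj⟩ := hmem.mp hg
    exact hLswap j g hj
  · rw [List.prod_flatten, List.map_ofFn]
    exact congrArg _ (congrArg _ (funext hLprod))
  · rw [List.length_flatten, List.map_ofFn, List.sum_ofFn]
    push_cast
    exact Finset.sum_le_sum fun j _ => hLlen j
  · rw [← hLprod j]
    exact list_prod_mem fun g hg => Subgroup.subset_closure (hmem.mpr ⟨j, hg⟩)

theorem stmt6_general (r : ℕ) (σ : Fin r → Equiv.Perm ℕ)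
    (hfin : ∀ j, {x | σ j x ≠ x}.Finite)
    (hconn : (intersectGraph σ).Connected) :
    2 * (Set.ncard (⋃ j, {x | σ j x ≠ x}) : ℤ) ≤
      (cayleyDist (List.ofFn σ).prod : ℤ) + (∑ j, (Set.ncard {x | σ j x ≠ x} : ℤ)) +
        (∑ j, (numCycles (σ j) : ℤ)) + 2 - 2 * (r : ℤ) := by
  have hfin' : ∀ j, (movedPoints (σ j)).Finite := hfin
  obtain ⟨l, hswap, hprod, hlen, hgen⟩ := exists_swap_factorization_ofFn σ hfin'
  have hgenus := two_mul_ncard_sub_numClassesOn_le (finite_iUnion hfin') hswap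
  have hcayley := cycleDefect_le_cayleyDist ⟨l, hswap, hprod⟩
  have hcomp := numClassesOn_iUnion_add_le σ hfin' hconn fun j =>
    sameCycle_setoid_le_orbitRel (hgen j)
  rw [hprod] at hgenus
  simp only [cycleDefect, Finset.sum_sub_distrib] at hlen
  change 2 * ((⋃ j, movedPoints (σ j)).ncard : ℤ) ≤
    _ + ∑ j, ((movedPoints (σ j)).ncard : ℤ) + _ + 2 - 2 * (r : ℤ)
  zify at hcomp
  linarith

/-- For jointly intersecting nontrivial finitely supported permutations `σ₁,…,σ_r`,
`2·|supp(σ₁) ∪ ⋯ ∪ supp(σ_r)| ≤ |σ₁⋯σ_r| + Σ_j |supp(σ_j)| + Σ_j c(σ_j) + 2 − 2r`. -/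
theorem stmt6 (r : ℕ) (hr : 1 ≤ r) (σ : Fin r → Equiv.Perm ℕ)
    (hfin : ∀ j, {x | σ j x ≠ x}.Finite) (hne : ∀ j, σ j ≠ 1)
    (hconn : (intersectGraph σ).Connected) :
    2 * (Set.ncard (⋃ j, {x | σ j x ≠ x}) : ℤ) ≤
      (cayleyDist (List.ofFn σ).prod : ℤ) + (∑ j, (Set.ncard {x | σ j x ≠ x} : ℤ)) +
        (∑ j, (numCycles (σ j) : ℤ)) + 2 - 2 * (r : ℤ) :=
  stmt6_general r σ hfin hconn
end

section
/- Fix n ≥ 0, k ≥ 1, and a set Ω with n+1 elements having a distinguished element p. In the group algebra ℝ[S_Ω] of the symmetric group of Ω, let X := Σ_{j ∈ Ω, j ≠ p} (j p) (the Jucys–Murphy element), let E : ℝ[S_Ω] → ℝ[S_Ω] be the linear map with E(g) = g if g(p) = p and E(g) = 0 otherwise (for group elements g), and define D_k := (n+1)^{−1} Σ over tuples (i_1,…,i_k) ∈ Ω^k with i_1 ≠ i_2, i_2 ≠ i_3, …, i_{k−1} ≠ i_k, and i_k ≠ i_1, of the product t(i_1,i_2)·t(i_2,i_3)⋯t(i_{k−1},i_k)·t(i_k,i_1),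 where t(a,b) is the transposition (a b) when a ≠ p and b ≠ p, and t(a,b) is the identity when a = p or b = p. Then D_k = E(X^k). -/
/-!
Let `M` be the `Ω × Ω` matrix over `ℝ[S_Ω]` with `M a b = t(a,b)` for `a ≠ b` and zeros on
the diagonal, so that the sum defining `D_k` is `tr (M ^ k)`. Every `t(c,b)` fixes `p`, hence
commutes with `X`, and `∑ c, (c p) M c b = (b p) X`; by induction on `k` this gives
`(M ^ k) a b = E ((a p) (b p) X ^ k)`. Every diagonal entry of `M ^ k` is therefore
`E (X ^ k)`, and the trace is `(n + 1) E (X ^ k)`.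
-/

open Finset Equiv MonoidAlgebra

namespace Matrix

variable {n R : Type*} [Fintype n] [DecidableEq n] [Semiring R]

theorem pow_succ_apply_eq_sum_prod (M : Matrix n n R) (k : ℕ) (a b : n) :
    (M ^ (k + 1)) a b = ∑ i : Fin k → n,
      (List.ofFn fun j => M ((Fin.cons a i : Fin (k + 1) → n) j)
        ((Fin.snoc i b : Fin (k + 1) → n) j)).prod := by
  induction k generalizing a with
  | zero => simp [Fin.snoc]
  | succ k ih =>
    rw [pow_succ', mul_apply, ← (Fin.consEquiv fun _ => n).sum_comp, Fintype.sum_prod_type]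
    refine sum_congr rfl fun c _ => ?_
    simp only [Fin.consEquiv, Equiv.coe_fn_mk, ← Fin.cons_snoc_eq_snoc_cons, List.ofFn_succ,
      List.prod_cons, Fin.cons_zero, Fin.cons_succ, ih, mul_sum]

theorem trace_pow_eq_sum_prod (M : Matrix n n R) (k : ℕ) [NeZero k] :
    trace (M ^ k) = ∑ i : Fin k → n, (List.ofFn fun j => M (i j) (i (j + 1))).prod := by
  obtain ⟨k, rfl⟩ : ∃ m, k = m + 1 := Nat.exists_eq_succ_of_ne_zero (NeZero.ne k)
  simp only [trace, diag, pow_succ_apply_eq_sum_prod]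
  rw [← (Fin.consEquiv fun _ => n).sum_comp, Fintype.sum_prod_type]
  refine sum_congr rfl fun a _ => sum_congr rfl fun i _ => ?_
  congr 2
  funext j
  congr 1
  induction j using Fin.lastCases with
  | last => simp
  | cast m => simp

end Matrix

section JucysMurphy

variable {R : Type*} [CommSemiring R] {Ω : Type*} [DecidableEq Ω]

def swapFixing (p a b : Ω) : Perm Ω :=
  if a = p ∨ b = p then 1 else swap a b

theorem swapFixing_apply_self (p a b : Ω) : swapFixing p a b p = p := by
  unfold swapFixing
  split_ifs with h
  · rfl
  · rw [not_or] at h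
    exact swap_apply_of_ne_of_ne (Ne.symm h.1) (Ne.symm h.2)

theorem swap_mul_swapFixing (p : Ω) {b c : Ω} (hcb : c ≠ b) :
    swap c p * swapFixing p c b = swap b p * swap (swap b p c) p := by
  unfold swapFixing
  ext z
  simp only [Perm.mul_apply, apply_ite (fun f : Perm Ω => f z), Perm.one_apply, swap_apply_def]
  grind

variable (R) in
noncomputable def walkMatrix (p : Ω) : Matrix Ω Ω (MonoidAlgebra R (Perm Ω)) :=
  fun a b => if a = b then 0 else of R (Perm Ω) (swapFixing p a b)

variable (R) in
noncomputable def jucysMurphy [Fintype Ω] (p : Ω) : MonoidAlgebra R (Perm Ω) :=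
  ∑ j ∈ univ.filter (· ≠ p), of R (Perm Ω) (swap j p)

theorem sum_cyclic_eq_trace_walkMatrix_pow [Fintype Ω] (p : Ω) (k : ℕ) [NeZero k] :
    ∑ i ∈ univ.filter (fun i : Fin k → Ω => ∀ j, i j ≠ i (j + 1)),
      of R (Perm Ω) (List.ofFn fun j => swapFixing p (i j) (i (j + 1))).prod =
    Matrix.trace (walkMatrix R p ^ k) := by
  rw [Matrix.trace_pow_eq_sum_prod, sum_filter]
  refine sum_congr rfl fun i _ => ?_
  split_ifs with h
  · rw [map_list_prod, List.map_ofFn]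
    refine congrArg List.prod (congrArg List.ofFn (funext fun j => ?_))
    simp [walkMatrix, h j]
  · obtain ⟨j, hj⟩ := not_forall_not.1 h
    refine (List.prod_eq_zero (List.mem_ofFn.2 ⟨j, ?_⟩)).symm
    simp [walkMatrix, hj]

theorem commute_of_jucysMurphy [Fintype Ω] {p : Ω} {s : Perm Ω} (hs : s p = p) :
    Commute (of R (Perm Ω) s) (jucysMurphy R p) := by
  have hmem : ∀ j, j ∈ univ.filter (· ≠ p) ↔ s j ∈ univ.filter (· ≠ p) := by
    simp [s.injective.eq_iff' hs]
  simp only [Commute, SemiconjBy, jucysMurphy, mul_sum, sum_mul, ← map_mul]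
  exact sum_equiv s hmem fun j _ => by rw [mul_swap_eq_swap_mul, hs]

theorem commute_walkMatrix_jucysMurphy_pow [Fintype Ω] (p a b : Ω) (k : ℕ) :
    Commute (walkMatrix R p a b) (jucysMurphy R p ^ k) := by
  unfold walkMatrix
  split_ifs
  · exact Commute.zero_left _
  · exact (commute_of_jucysMurphy (swapFixing_apply_self p a b)).pow_right k

theorem sum_of_swap_mul_walkMatrix [Fintype Ω] (p b : Ω) :
    ∑ c, of R (Perm Ω) (swap c p) * walkMatrix R p c b =
      of R (Perm Ω) (swap b p) * jucysMurphy R p := by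
  simp only [walkMatrix, mul_ite, mul_zero, sum_ite, sum_const_zero, zero_add, ← map_mul,
    jucysMurphy, mul_sum]
  -- `swap b p` maps `{c | c ≠ b}` bijectively onto `{c | c ≠ p}`
  refine sum_equiv (swap b p) (by simp [swap_apply_eq_iff]) fun c hc => ?_
  rw [swap_mul_swapFixing p (mem_filter.1 hc).2]

variable {p : Ω} {E : MonoidAlgebra R (Perm Ω) →ₗ[R] MonoidAlgebra R (Perm Ω)}

theorem map_mul_of_right
    (hE : ∀ g : Perm Ω, E (of R (Perm Ω) g) = if g p = p then of R (Perm Ω) g else 0)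
    {h : Perm Ω} (hh : h p = p) (x : MonoidAlgebra R (Perm Ω)) :
    E (x * of R (Perm Ω) h) = E x * of R (Perm Ω) h := by
  induction x using MonoidAlgebra.induction_on with
  | of g => simp only [← map_mul, hE, Perm.mul_apply, hh, ite_mul, zero_mul]
  | add x y hx hy => rw [add_mul, map_add, map_add, hx, hy, add_mul]
  | smul r x hx => rw [smul_mul_assoc, map_smul, map_smul, hx, smul_mul_assoc]

theorem map_mul_walkMatrix_right [Fintype Ω]
    (hE : ∀ g : Perm Ω, E (of R (Perm Ω) g) = if g p = p then of R (Perm Ω) g else 0)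
    (x : MonoidAlgebra R (Perm Ω)) (a b : Ω) :
    E (x * walkMatrix R p a b) = E x * walkMatrix R p a b := by
  unfold walkMatrix
  split_ifs
  · simp
  · exact map_mul_of_right hE (swapFixing_apply_self p a b) x

theorem walkMatrix_pow_apply [Fintype Ω]
    (hE : ∀ g : Perm Ω, E (of R (Perm Ω) g) = if g p = p then of R (Perm Ω) g else 0)
    (k : ℕ) (a b : Ω) :
    (walkMatrix R p ^ k) a b =
      E (of R (Perm Ω) (swap a p * swap b p) * jucysMurphy R p ^ k) := by
  induction k generalizing b with
  | zero =>
    rw [pow_zero, pow_zero, mul_one, hE, Perm.mul_apply, swap_apply_right, Matrix.one_apply]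
    by_cases hab : a = b
    · simp [hab, -of_apply]
    · simp [hab, swap_apply_eq_iff, Ne.symm hab]
  | succ k ih =>
    calc (walkMatrix R p ^ (k + 1)) a b
        = ∑ c, E (of R (Perm Ω) (swap a p) * (of R (Perm Ω) (swap c p) * walkMatrix R p c b) *
            jucysMurphy R p ^ k) := by
          simp only [pow_succ, Matrix.mul_apply, ih, ← map_mul_walkMatrix_right hE,
            map_mul (of R (Perm Ω)), mul_assoc, (commute_walkMatrix_jucysMurphy_pow p _ b k).eq]
      _ = E (of R (Perm Ω) (swap a p * swap b p) * jucysMurphy R p ^ (k + 1)) := by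
          rw [← map_sum, ← sum_mul, ← mul_sum, sum_of_swap_mul_walkMatrix,
            map_mul (of R (Perm Ω)), pow_succ', mul_assoc, mul_assoc, mul_assoc]

theorem trace_walkMatrix_pow [Fintype Ω]
    (hE : ∀ g : Perm Ω, E (of R (Perm Ω) g) = if g p = p then of R (Perm Ω) g else 0)
    (k : ℕ) :
    Matrix.trace (walkMatrix R p ^ k) = Fintype.card Ω • E (jucysMurphy R p ^ k) := by
  simp [Matrix.trace, walkMatrix_pow_apply hE, -of_apply]

end JucysMurphy

theorem stmt9_general (n k : ℕ) [NeZero k]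
    (Ω : Type*) [Fintype Ω] [DecidableEq Ω] (hΩ : Fintype.card Ω = n + 1) (p : Ω)
    (E : MonoidAlgebra ℝ (Equiv.Perm Ω) →ₗ[ℝ] MonoidAlgebra ℝ (Equiv.Perm Ω))
    (hE : ∀ g : Equiv.Perm Ω, E (MonoidAlgebra.of ℝ (Equiv.Perm Ω) g) =
      if g p = p then MonoidAlgebra.of ℝ (Equiv.Perm Ω) g else 0) :
    (((n : ℝ) + 1)⁻¹ •
      ∑ i ∈ Finset.univ.filter (fun i : Fin k → Ω => ∀ j : Fin k, i j ≠ i (j + 1)),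
        MonoidAlgebra.of ℝ (Equiv.Perm Ω)
          ((List.ofFn fun j : Fin k =>
            if i j = p ∨ i (j + 1) = p then 1 else Equiv.swap (i j) (i (j + 1))).prod)) =
    E ((∑ j ∈ Finset.univ.filter fun j : Ω => j ≠ p,
          MonoidAlgebra.of ℝ (Equiv.Perm Ω) (Equiv.swap j p)) ^ k) := by
  calc _ = ((n : ℝ) + 1)⁻¹ • Matrix.trace (walkMatrix ℝ p ^ k) :=
        congrArg _ (sum_cyclic_eq_trace_walkMatrix_pow p k)
    _ = E (jucysMurphy ℝ p ^ k) := by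
        rw [trace_walkMatrix_pow hE, hΩ, ← Nat.cast_smul_eq_nsmul ℝ, smul_smul, Nat.cast_succ,
          inv_mul_cancel₀ (by positivity), one_smul]

/-- `D_k = E(X^k)` where `X` is the Jucys–Murphy element `Σ_{j ≠ p} (j p)`, `E` kills the
group elements moving `p`, and `D_k` is `(n+1)⁻¹` times the sum over cyclically
consecutive-distinct tuples `(i₁,…,i_k) ∈ Ω^k` of `t(i₁,i₂)⋯t(i_{k−1},i_k)t(i_k,i₁)`,
with `t(a,b)` the transposition `(a b)` unless `a = p` or `b = p`, in which case it is
the identity. -/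
theorem stmt9 (n k : ℕ) (hk : 1 ≤ k) [NeZero k]
    (Ω : Type*) [Fintype Ω] [DecidableEq Ω] (hΩ : Fintype.card Ω = n + 1) (p : Ω)
    (E : MonoidAlgebra ℝ (Equiv.Perm Ω) →ₗ[ℝ] MonoidAlgebra ℝ (Equiv.Perm Ω))
    (hE : ∀ g : Equiv.Perm Ω, E (MonoidAlgebra.of ℝ (Equiv.Perm Ω) g) =
      if g p = p then MonoidAlgebra.of ℝ (Equiv.Perm Ω) g else 0) :
    (((n : ℝ) + 1)⁻¹ •
      ∑ i ∈ Finset.univ.filter (fun i : Fin k → Ω => ∀ j : Fin k, i j ≠ i (j + 1)),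
        MonoidAlgebra.of ℝ (Equiv.Perm Ω)
          ((List.ofFn fun j : Fin k =>
            if i j = p ∨ i (j + 1) = p then 1 else Equiv.swap (i j) (i (j + 1))).prod)) =
    E ((∑ j ∈ Finset.univ.filter fun j : Ω => j ≠ p,
          MonoidAlgebra.of ℝ (Equiv.Perm Ω) (Equiv.swap j p)) ^ k) :=
  stmt9_general n k Ω hΩ p E hE
end

section
/- Let r ≥ 2 and let σ_1,…,σ_r be nontrivial cycles in the group of finitely supported permutations of ℕ with pairwise disjoint supports; write |σ| = |supp(σ)| − 1 for the Cayley distance of a cycle. Let (M_n)_{n≥1} be any sequence of real-valued functions on the finitely supported permutations of ℕ. For r′ ≥ 1 and permutations τ_1,…,τ_{r′}, define the permutation-cumulant κ_{n,r′}(τ_1,…,τ_{r′}) := Σ_{π ∈ Θ_{r′}} (−1)^{|π|−1}(|π|−1)!·∏_{B∈π} M_n(∏_{j∈B} τ_j), where Θ_{r′} is the set of set partitions of {1,…,r′} (the τ_j commute, being disjoint). Assume that for each i = 1,…,r the limit lim_{n→∞} n^{|σ_i|/2}·M_n(σ_i) exists. Then the following are equivalent: (1) for every r′ ≥ 1 and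 every subset {τ_1,…,τ_{r′}} ⊆ {σ_1,…,σ_r}, lim_{n→∞} n^{(|τ_1|+⋯+|τ_{r′}|)/2}·(M_n(τ_1⋯τ_{r′}) − M_n(τ_1)⋯M_n(τ_{r′})) = 0; (2) for every r′ ≥ 2 and every subset {τ_1,…,τ_{r′}} ⊆ {σ_1,…,σ_r}, lim_{n→∞} n^{(|τ_1|+⋯+|τ_{r′}|)/2}·κ_{n,r′}(τ_1,…,τ_{r′}) = 0. -/
/-!
Write `Y t n = n ^ (∑ j ∈ t, |σ j| / 2) * M n (∏ j ∈ t, σ j)` for the rescaled joint moments.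
The rescaling factor is multiplicative over the blocks of a partition, so the rescaled
cumulant of `s` is the cumulant of the family `Y`. If every `Y t` tends to `∏ j ∈ t, L j`,
the cumulant of `s` tends to `(∑ π, μ(π, 1̂)) * ∏ j ∈ s, L j`, and the Möbius sum vanishes
once `#s ≥ 2`: sorting the partitions of `insert a t` by the part that receives `a`, a partition
of `t` with `k` parts contributes `μ_{k+1} + k μ_k = 0`. Conversely, the one-block term of the
cumulant of `t` is `Y t` itself and every other term only involves strictly smaller blocks, so
strong induction on `t` recovers `Y t → ∏ j ∈ t, L j`.
-/

open Filter

/-- The `m`-th order permutation-cumulant of `τ₁,…,τ_m` with respect to `M`: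
`κ(τ₁,…,τ_m) = Σ_{π} (−1)^{|π|−1}(|π|−1)! ∏_{B∈π} M(∏_{j∈B} τ_j)`, the sum being over
set partitions `π` of `{1,…,m}` (blocks multiplied in increasing order of indices). -/
noncomputable def permCumulant {m : ℕ} (M : Equiv.Perm ℕ → ℝ) (τ : Fin m → Equiv.Perm ℕ) :
    ℝ :=
  ∑ᶠ P : Finpartition (Finset.univ : Finset (Fin m)),
    (-1 : ℝ) ^ (P.parts.card - 1) * (Nat.factorial (P.parts.card - 1) : ℝ) *
      ∏ B ∈ P.parts, M (((B.sort (· ≤ ·)).map τ).prod)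

open Finset Topology

namespace Finpartition

section Map

variable {α β : Type*} [DecidableEq α] [DecidableEq β] {u : Finset α}

def finsetMap (e : α ↪ β) (P : Finpartition u) : Finpartition (u.map e) where
  parts := P.parts.map (mapEmbedding e).toEmbedding
  supIndep := by
    rw [supIndep_iff_pairwiseDisjoint, coe_map]
    rintro _ ⟨B, hB, rfl⟩ _ ⟨C, hC, rfl⟩ hBC
    exact (disjoint_map e).2 (P.disjoint hB hC fun h => hBC (h ▸ rfl))
  sup_parts := by
    rw [sup_map]
    exact P.sup_parts_apply (f := Finset.map e) (fun x y => map_union x y) (map_empty e)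
  bot_notMem h := by
    obtain ⟨B, hB, hB0⟩ := mem_map.1 h
    exact P.ne_bot hB (map_eq_empty.1 hB0)

noncomputable def finsetComap (e : α ↪ β) (Q : Finpartition (u.map e)) : Finpartition u where
  parts := Q.parts.image fun B => B.preimage e e.injective.injOn
  supIndep := by
    rw [supIndep_iff_pairwiseDisjoint, coe_image]
    rintro _ ⟨B, hB, rfl⟩ _ ⟨C, hC, rfl⟩ hBC
    exact disjoint_preimage (hs := e.injective.injOn) (ht := e.injective.injOn)
      (Q.disjoint hB hC fun h => hBC (h ▸ rfl))
  sup_parts := by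
    rw [sup_image]
    refine (Q.sup_parts_apply (f := fun B => B.preimage e e.injective.injOn)
      (fun x y => preimage_union _) preimage_empty).trans (preimage_map e u)
  bot_notMem h := by
    obtain ⟨B, hB, hB0⟩ := mem_image.1 h
    obtain ⟨b, hb⟩ := Q.nonempty_of_mem_parts hB
    obtain ⟨x, -, rfl⟩ := mem_map.1 (Q.le hB hb)
    have hx : x ∈ B.preimage e e.injective.injOn := mem_preimage.2 hb
    rw [hB0] at hx
    exact notMem_empty x hx

lemma parts_finsetMap (e : α ↪ β) (P : Finpartition u) :
    (P.finsetMap e).parts = P.parts.map (mapEmbedding e).toEmbedding := rfl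

lemma finsetMap_finsetComap (e : α ↪ β) (Q : Finpartition (u.map e)) :
    (Q.finsetComap e).finsetMap e = Q := by
  ext1
  refine (map_eq_image _ _).trans <| image_image.trans <|
    (image_congr fun B hB => ?_).trans image_id
  obtain ⟨C, -, rfl⟩ := subset_map_iff.1 (Q.le hB)
  simp [preimage_map]

lemma finsetMap_injective (e : α ↪ β) :
    Function.Injective (finsetMap (u := u) e) := fun _ _ h =>
  Finpartition.ext (map_injective _ (congrArg Finpartition.parts h))

theorem sum_finsetMap_copy {M : Type*} [AddCommMonoid M] (e : α ↪ β) {v : Finset β}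
    (h : u.map e = v) (f : Finpartition v → M) :
    ∑ P : Finpartition u, f ((P.finsetMap e).copy h) = ∑ Q : Finpartition v, f Q := by
  subst h
  exact Function.Bijective.sum_comp
    ⟨finsetMap_injective e, fun Q => ⟨Q.finsetComap e, finsetMap_finsetComap e Q⟩⟩ f

end Map

section Insert

variable {α : Type*} [DecidableEq α] {t : Finset α} {a : α}

lemma subset_of_mem_insert_empty_parts (P : Finpartition t) {B : Finset α}
    (hB : B ∈ insert ∅ P.parts) : B ⊆ t := by
  rcases mem_insert.1 hB with rfl | hB
  · exact empty_subset _
  · exact P.le hB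

/-- Adds `a` to the part `B` of `P`, where `B = ∅` means adding the new part `{a}`. -/
def insertIntoPart (P : Finpartition t) (ha : a ∉ t) (B : Finset α)
    (hB : B ∈ insert ∅ P.parts) : Finpartition (insert a t) where
  parts := insert (insert a B) (P.parts.erase B)
  supIndep := by
    rw [supIndep_iff_pairwiseDisjoint, coe_insert]
    refine (P.disjoint.subset (coe_subset.2 (erase_subset _ _))).insert fun C hC _ => ?_
    have hCP := mem_of_mem_erase hC
    rw [id, id, disjoint_insert_left]
    refine ⟨fun h => ha (P.le hCP h), ?_⟩
    rcases mem_insert.1 hB with rfl | hB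
    · exact disjoint_empty_left _
    · exact P.disjoint hB hCP (ne_of_mem_erase hC).symm
  sup_parts := by
    have hsup : B ∪ (P.parts.erase B).sup id = t := by
      rcases mem_insert.1 hB with rfl | hB
      · rw [erase_eq_of_notMem P.empty_notMem_parts, P.sup_parts, empty_union]
      · calc B ∪ (P.parts.erase B).sup id = (insert B (P.parts.erase B)).sup id := by
              rw [sup_insert]; rfl
          _ = t := by rw [insert_erase hB, P.sup_parts]
    rw [sup_insert, id, sup_eq_union, insert_union, hsup]
  bot_notMem h := by
    rcases mem_insert.1 h with h | h
    · exact insert_ne_empty a B h.symm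
    · exact P.bot_notMem (mem_of_mem_erase h)

lemma parts_insertIntoPart (P : Finpartition t) (ha : a ∉ t) (B : Finset α)
    (hB : B ∈ insert ∅ P.parts) :
    (P.insertIntoPart ha B hB).parts = insert (insert a B) (P.parts.erase B) := rfl

lemma card_insertIntoPart (P : Finpartition t) (ha : a ∉ t) (B : Finset α)
    (hB : B ∈ insert ∅ P.parts) :
    #(P.insertIntoPart ha B hB).parts = if B = ∅ then #P.parts + 1 else #P.parts := by
  have hnew : insert a B ∉ P.parts.erase B :=
    fun h => ha (P.le (mem_of_mem_erase h) (mem_insert_self a B))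
  rw [parts_insertIntoPart, card_insert_of_notMem hnew]
  split_ifs with hB0
  · rw [hB0, erase_eq_of_notMem P.empty_notMem_parts]
  · have hBP : B ∈ P.parts := (mem_insert.1 hB).resolve_left hB0
    rw [card_erase_add_one hBP]

lemma part_insertIntoPart (P : Finpartition t) (ha : a ∉ t) (B : Finset α)
    (hB : B ∈ insert ∅ P.parts) : (P.insertIntoPart ha B hB).part a = insert a B :=
  part_eq_of_mem _ (mem_insert_self _ _) (mem_insert_self a B)

def avoidInsert (P : Finpartition (insert a t)) (ha : a ∉ t) : Finpartition t :=
  (P.avoid {a}).copy (by rw [sdiff_singleton_eq_erase, erase_insert ha])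

lemma avoidInsert_parts (P : Finpartition (insert a t)) (ha : a ∉ t) :
    (P.avoidInsert ha).parts = (P.parts.image (· \ {a})).erase ∅ := rfl

lemma avoidInsert_insertIntoPart (P : Finpartition t) (ha : a ∉ t) (B : Finset α)
    (hB : B ∈ insert ∅ P.parts) : (P.insertIntoPart ha B hB).avoidInsert ha = P := by
  have haB : a ∉ B := fun h => ha (P.subset_of_mem_insert_empty_parts hB h)
  have himage : ((P.parts.erase B).image (· \ {a})) = P.parts.erase B := by
    refine (image_congr fun C hC => ?_).trans image_id
    rw [sdiff_singleton_eq_erase]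
    exact erase_eq_of_notMem fun h => ha (P.le (mem_of_mem_erase hC) h)
  ext1
  rw [avoidInsert_parts, insertIntoPart, image_insert, himage, sdiff_singleton_eq_erase,
    erase_insert haB]
  rcases mem_insert.1 hB with rfl | hB
  · rw [erase_insert (notMem_erase _ _), erase_eq_of_notMem P.empty_notMem_parts]
  · rw [insert_erase hB, erase_eq_of_notMem P.empty_notMem_parts]

lemma erase_part_mem_insert_empty_parts (Q : Finpartition (insert a t)) (ha : a ∉ t) :
    (Q.part a).erase a ∈ insert ∅ (Q.avoidInsert ha).parts := by
  by_cases h : (Q.part a).erase a = ∅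
  · rw [h]; exact mem_insert_self _ _
  refine mem_insert_of_mem (mem_erase.2 ⟨h, mem_image.2 ⟨Q.part a, ?_, ?_⟩⟩)
  · exact Q.part_mem.2 (mem_insert_self a t)
  · exact sdiff_singleton_eq_erase a _

lemma insertIntoPart_avoidInsert (Q : Finpartition (insert a t)) (ha : a ∉ t) :
    (Q.avoidInsert ha).insertIntoPart ha ((Q.part a).erase a)
      (Q.erase_part_mem_insert_empty_parts ha) = Q := by
  set A := Q.part a
  have hA : A ∈ Q.parts := Q.part_mem.2 (mem_insert_self a t)
  have haA : a ∈ A := Q.mem_part_self.2 (mem_insert_self a t)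
  have hrest : (Q.parts.erase A).image (· \ {a}) = Q.parts.erase A := by
    refine (image_congr fun C hC => ?_).trans image_id
    rw [sdiff_singleton_eq_erase]
    exact erase_eq_of_notMem fun h =>
      ne_of_mem_erase hC (Q.eq_of_mem_parts (mem_of_mem_erase hC) hA h haA)
  have h0 : ∅ ∉ Q.parts.erase A := fun h => Q.empty_notMem_parts (mem_of_mem_erase h)
  have hA' : A.erase a ∉ Q.parts.erase A := by
    intro hmem
    obtain ⟨b, hb⟩ := nonempty_iff_ne_empty.2 (ne_of_mem_of_not_mem hmem h0)
    exact ne_of_mem_erase hmem (Q.eq_of_mem_parts (mem_of_mem_erase hmem) hA hb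
      (mem_of_mem_erase hb))
  ext1
  rw [parts_insertIntoPart, avoidInsert_parts, insert_erase haA]
  conv_lhs => rw [← insert_erase hA, image_insert, hrest, sdiff_singleton_eq_erase]
  rw [erase_right_comm, erase_insert hA', erase_eq_of_notMem h0, insert_erase hA]

theorem sum_card_parts_insert {M : Type*} [AddCommMonoid M] (ha : a ∉ t) (f : ℕ → M) :
    ∑ Q : Finpartition (insert a t), f #Q.parts =
      ∑ P : Finpartition t, (f (#P.parts + 1) + #P.parts • f #P.parts) := by
  have hfibre : ∀ P : Finpartition t,
      ∑ B ∈ insert ∅ P.parts, f (if B = ∅ then #P.parts + 1 else #P.parts) =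
        f (#P.parts + 1) + #P.parts • f #P.parts := by
    intro P
    rw [sum_insert P.empty_notMem_parts, if_pos rfl,
      sum_congr rfl fun B hB => by rw [if_neg (ne_of_mem_of_not_mem hB P.empty_notMem_parts)],
      sum_const]
  calc ∑ Q : Finpartition (insert a t), f #Q.parts
      = ∑ x ∈ univ.sigma fun P : Finpartition t => insert ∅ P.parts,
          f (if x.2 = ∅ then #x.1.parts + 1 else #x.1.parts) := ?_
    _ = _ := sum_sigma _ _ _
    _ = _ := sum_congr rfl fun P _ => hfibre P
  symm
  refine sum_bij' (fun x hx => x.1.insertIntoPart ha x.2 (mem_sigma.1 hx).2)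
    (fun Q _ => ⟨Q.avoidInsert ha, (Q.part a).erase a⟩) (fun _ _ => mem_univ _)
    (fun Q _ => mem_sigma.2 ⟨mem_univ _, Q.erase_part_mem_insert_empty_parts ha⟩) ?_
    (fun Q _ => Q.insertIntoPart_avoidInsert ha) ?_
  · rintro ⟨P, B⟩ hB
    have hB := (mem_sigma.1 hB).2
    have haB : a ∉ B := fun h => ha (P.subset_of_mem_insert_empty_parts hB h)
    exact Sigma.ext (P.avoidInsert_insertIntoPart ha B hB)
      (heq_of_eq (by rw [part_insertIntoPart, erase_insert haB]))
  · rintro ⟨P, B⟩ hB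
    rw [card_insertIntoPart]

end Insert

end Finpartition

open scoped Nat in
/-- The Möbius function `μ(π, 1̂)` of the partition lattice, for `π` with `k` blocks. -/
noncomputable def cumulantCoeff (k : ℕ) : ℝ := (-1) ^ (k - 1) * (k - 1)!

lemma cumulantCoeff_one : cumulantCoeff 1 = 1 := by simp [cumulantCoeff]

lemma cumulantCoeff_succ_add_mul {k : ℕ} (hk : k ≠ 0) :
    cumulantCoeff (k + 1) + k * cumulantCoeff k = 0 := by
  obtain ⟨j, rfl⟩ := Nat.exists_eq_succ_of_ne_zero hk
  simp only [cumulantCoeff, Nat.succ_sub_one, Nat.factorial_succ, pow_succ, Nat.cast_mul]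
  push_cast
  ring

theorem Finpartition.sum_cumulantCoeff_eq_zero {α : Type*} [DecidableEq α] {s : Finset α}
    (hs : 1 < #s) : ∑ P : Finpartition s, cumulantCoeff #P.parts = 0 := by
  obtain ⟨a, ha⟩ := card_pos.1 (zero_lt_one.trans hs)
  have ht : (s.erase a).Nonempty := by
    rw [← card_pos, card_erase_of_mem ha]; omega
  rw [← insert_erase ha, sum_card_parts_insert (notMem_erase a s)]
  refine sum_eq_zero fun P _ => ?_
  rw [nsmul_eq_mul]
  exact cumulantCoeff_succ_add_mul (card_ne_zero.2 (P.parts_nonempty ht.ne_empty))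

section Cumulant

variable {ι : Type*} [DecidableEq ι]

lemma Finpartition.prod_parts_prod {M : Type*} [CommMonoid M] {s : Finset ι}
    (P : Finpartition s) (g : ι → M) : ∏ B ∈ P.parts, ∏ i ∈ B, g i = ∏ i ∈ s, g i := by
  conv_rhs => rw [← P.biUnion_parts]
  exact (prod_biUnion P.supIndep.pairwiseDisjoint).symm

noncomputable def partitionCumulant (X : Finset ι → ℝ) (s : Finset ι) : ℝ :=
  ∑ P : Finpartition s, cumulantCoeff #P.parts * ∏ B ∈ P.parts, X B

lemma prod_mul_partitionCumulant (c : ι → ℝ) (X : Finset ι → ℝ) (s : Finset ι) :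
    (∏ j ∈ s, c j) * partitionCumulant X s =
      partitionCumulant (fun t => (∏ j ∈ t, c j) * X t) s := by
  rw [partitionCumulant, partitionCumulant, mul_sum]
  refine sum_congr rfl fun P _ => ?_
  rw [prod_mul_distrib, P.prod_parts_prod]
  ring

lemma Finpartition.ssubset_of_ne_indiscrete {s B : Finset ι} (hs : s ≠ ∅) {P : Finpartition s}
    (hP : P ≠ indiscrete hs) (hB : B ∈ P.parts) : B ⊂ s := by
  refine (P.le hB).ssubset_of_ne fun hBs => hP (Finpartition.ext ?_)
  subst hBs
  refine eq_singleton_iff_unique_mem.2 ⟨hB, fun C hC => ?_⟩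
  by_contra hCB
  obtain ⟨c, hc⟩ := P.nonempty_of_mem_parts hC
  exact disjoint_left.1 (P.disjoint hC hB hCB) hc (P.le hC hc)

lemma partitionCumulant_eq_add_sum_erase_indiscrete (X : Finset ι → ℝ) {s : Finset ι}
    (hs : s ≠ ∅) :
    partitionCumulant X s = X s + ∑ P ∈ univ.erase (Finpartition.indiscrete hs),
      cumulantCoeff #P.parts * ∏ B ∈ P.parts, X B := by
  rw [partitionCumulant, ← add_sum_erase _ _ (mem_univ (Finpartition.indiscrete hs)),
    Finpartition.indiscrete_parts, card_singleton, cumulantCoeff_one, one_mul, prod_singleton]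

lemma sum_erase_indiscrete_cumulantCoeff {s : Finset ι} (hs : 1 < #s) :
    ∑ P ∈ univ.erase (Finpartition.indiscrete (card_pos.1 (zero_lt_one.trans hs)).ne_empty),
      cumulantCoeff #P.parts = -1 := by
  rw [sum_erase_eq_sub (mem_univ _), Finpartition.sum_cumulantCoeff_eq_zero hs,
    Finpartition.indiscrete_parts, card_singleton, cumulantCoeff_one, zero_sub]

variable {γ : Type*} {l : Filter γ} {Y : Finset ι → γ → ℝ} {L : ι → ℝ}

lemma tendsto_prod_parts {s : Finset ι} (P : Finpartition s)
    (h : ∀ B ∈ P.parts, Tendsto (Y B) l (𝓝 (∏ j ∈ B, L j))) :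
    Tendsto (fun x => ∏ B ∈ P.parts, Y B x) l (𝓝 (∏ j ∈ s, L j)) :=
  P.prod_parts_prod L ▸ tendsto_finsetProd _ h

lemma tendsto_sum_cumulantCoeff_mul_prod_parts {s : Finset ι} (S : Finset (Finpartition s))
    (h : ∀ P ∈ S, ∀ B ∈ P.parts, Tendsto (Y B) l (𝓝 (∏ j ∈ B, L j))) :
    Tendsto (fun x => ∑ P ∈ S, cumulantCoeff #P.parts * ∏ B ∈ P.parts, Y B x) l
      (𝓝 ((∑ P ∈ S, cumulantCoeff #P.parts) * ∏ j ∈ s, L j)) := by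
  rw [sum_mul]
  exact tendsto_finsetSum _ fun P hP => (tendsto_prod_parts P (h P hP)).const_mul _

theorem tendsto_partitionCumulant_of_tendsto_prod {s : Finset ι} (hs : 1 < #s)
    (h : ∀ t : Finset ι, t.Nonempty → Tendsto (Y t) l (𝓝 (∏ j ∈ t, L j))) :
    Tendsto (fun x => partitionCumulant (Y · x) s) l (𝓝 0) := by
  have := tendsto_sum_cumulantCoeff_mul_prod_parts (Y := Y) (L := L) (l := l)
    (univ : Finset (Finpartition s))
    fun P _ B hB => h B (P.nonempty_of_mem_parts hB)
  rwa [Finpartition.sum_cumulantCoeff_eq_zero hs, zero_mul] at this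

theorem tendsto_prod_of_tendsto_partitionCumulant
    (hY : ∀ j, Tendsto (Y {j}) l (𝓝 (L j)))
    (hκ : ∀ s : Finset ι, 1 < #s → Tendsto (fun x => partitionCumulant (Y · x) s) l (𝓝 0))
    (t : Finset ι) (ht : t.Nonempty) : Tendsto (Y t) l (𝓝 (∏ j ∈ t, L j)) := by
  induction t using Finset.strongInduction with
  | H t ih =>
    obtain ⟨j, rfl⟩ | htn := ht.exists_eq_singleton_or_nontrivial
    · rw [prod_singleton]
      exact hY j
    have ht1 : 1 < #t := one_lt_card_iff_nontrivial.2 htn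
    have hrest := tendsto_sum_cumulantCoeff_mul_prod_parts (Y := Y) (L := L) (l := l)
      (univ.erase (Finpartition.indiscrete ht.ne_empty)) fun P hP B hB =>
        ih B (P.ssubset_of_ne_indiscrete ht.ne_empty (ne_of_mem_erase hP) hB)
          (P.nonempty_of_mem_parts hB)
    rw [sum_erase_indiscrete_cumulantCoeff ht1, neg_one_mul] at hrest
    have hdiff := (hκ t ht1).sub hrest
    rw [zero_sub, neg_neg] at hdiff
    refine hdiff.congr fun x => ?_
    rw [partitionCumulant_eq_add_sum_erase_indiscrete _ ht.ne_empty, add_sub_cancel_right]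

theorem forall_tendsto_prod_iff_forall_tendsto_partitionCumulant
    (hY : ∀ j, Tendsto (Y {j}) l (𝓝 (L j))) :
    (∀ t : Finset ι, t.Nonempty → Tendsto (Y t) l (𝓝 (∏ j ∈ t, L j))) ↔
      ∀ s : Finset ι, 1 < #s → Tendsto (fun x => partitionCumulant (Y · x) s) l (𝓝 0) :=
  ⟨fun h _ hs => tendsto_partitionCumulant_of_tendsto_prod hs h,
    tendsto_prod_of_tendsto_partitionCumulant hY⟩

end Cumulant

lemma tendsto_prod_mul_sub_prod_iff {ι γ : Type*} {l : Filter γ} (t : Finset ι)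
    {c F : ι → γ → ℝ} {m : γ → ℝ} {L : ι → ℝ}
    (hF : ∀ j ∈ t, Tendsto (fun x => c j x * F j x) l (𝓝 (L j))) :
    Tendsto (fun x => (∏ j ∈ t, c j x) * (m x - ∏ j ∈ t, F j x)) l (𝓝 0) ↔
      Tendsto (fun x => (∏ j ∈ t, c j x) * m x) l (𝓝 (∏ j ∈ t, L j)) := by
  have hprod := tendsto_finsetProd t hF
  simp only [mul_sub, ← prod_mul_distrib]
  refine ⟨fun h => by simpa only [zero_add, sub_add_cancel] using h.add hprod, fun h => ?_⟩
  rw [← sub_self (∏ j ∈ t, L j)]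
  exact h.sub hprod

theorem permCumulant_orderIsoOfFin {ι : Type*} [LinearOrder ι] (M : Equiv.Perm ℕ → ℝ)
    (σ : ι → Equiv.Perm ℕ) (s : Finset ι) :
    permCumulant M (fun i => σ (s.orderIsoOfFin rfl i)) =
      partitionCumulant (fun t => M ((t.sort (· ≤ ·)).map σ).prod) s := by
  set e := (s.orderEmbOfFin rfl).toEmbedding
  rw [permCumulant, finsum_eq_sum_of_fintype, partitionCumulant,
    ← Finpartition.sum_finsetMap_copy e (s.map_orderEmbOfFin_univ rfl)]
  refine sum_congr rfl fun P _ => ?_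
  rw [Finpartition.copy_parts, Finpartition.parts_finsetMap, card_map, prod_map]
  congr 1
  refine prod_congr rfl fun B _ => ?_
  rw [RelEmbedding.coe_toEmbedding, mapEmbedding_apply,
    ← StrictMonoOn.map_finsetSort e B ((s.orderEmbOfFin rfl).strictMono.strictMonoOn _),
    List.map_map]
  rfl

theorem stmt12_general (r : ℕ) (σ : Fin r → Equiv.Perm ℕ)
    (M : ℕ → Equiv.Perm ℕ → ℝ)
    (hlim : ∀ j, ∃ L : ℝ,
      Tendsto (fun n : ℕ => (n : ℝ) ^ (((Set.ncard {x | σ j x ≠ x} : ℝ) - 1) / 2) * M n (σ j))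
        atTop (nhds L)) :
    ((∀ s : Finset (Fin r), s.Nonempty →
        Tendsto (fun n : ℕ =>
            (n : ℝ) ^ ((∑ j ∈ s, ((Set.ncard {x | σ j x ≠ x} : ℝ) - 1)) / 2) *
              (M n (((s.sort (· ≤ ·)).map σ).prod) - ∏ j ∈ s, M n (σ j)))
          atTop (nhds 0)) ↔
      (∀ s : Finset (Fin r), 2 ≤ s.card →
        Tendsto (fun n : ℕ =>
            (n : ℝ) ^ ((∑ j ∈ s, ((Set.ncard {x | σ j x ≠ x} : ℝ) - 1)) / 2) *
              permCumulant (M n) fun t : Fin s.card => σ (s.orderIsoOfFin rfl t))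
          atTop (nhds 0))) := by
  choose L hL using hlim
  set e : Fin r → ℝ := fun j => ((Set.ncard {x | σ j x ≠ x} : ℝ) - 1) / 2
  set Y : Finset (Fin r) → ℕ → ℝ := fun t n =>
    (∏ j ∈ t, (n : ℝ) ^ e j) * M n ((t.sort (· ≤ ·)).map σ).prod
  have hpow (t : Finset (Fin r)) : ∀ᶠ n : ℕ in atTop,
      (n : ℝ) ^ ((∑ j ∈ t, ((Set.ncard {x | σ j x ≠ x} : ℝ) - 1)) / 2) =
        ∏ j ∈ t, (n : ℝ) ^ e j :=
    (eventually_gt_atTop 0).mono fun n hn => by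
      rw [sum_div, Real.rpow_sum_of_pos (by exact_mod_cast hn)]
  have hY (j : Fin r) : Tendsto (Y {j}) atTop (𝓝 (L j)) := by simpa [Y] using hL j
  refine (forall₂_congr fun t _ => ?_).trans <|
    (forall_tendsto_prod_iff_forall_tendsto_partitionCumulant hY).trans <|
      forall₂_congr fun s _ => ?_
  · rw [tendsto_congr' ((hpow t).mono fun n hn => by rw [hn])]
    exact tendsto_prod_mul_sub_prod_iff t fun j _ => hL j
  · refine tendsto_congr' ((hpow s).mono fun n hn => ?_)
    dsimp only
    rw [hn, permCumulant_orderIsoOfFin, prod_mul_partitionCumulant]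

/-- Equivalence of vanishing of rescaled "covariance-type" differences and of rescaled
permutation-cumulants for disjoint cycles `σ₁,…,σ_r`, assuming the rescaled first-order
limits exist. -/
theorem stmt12 (r : ℕ) (hr : 2 ≤ r) (σ : Fin r → Equiv.Perm ℕ)
    (hcyc : ∀ j, (σ j).IsCycle) (hfin : ∀ j, {x | σ j x ≠ x}.Finite)
    (hdisj : Pairwise fun j j' => (σ j).Disjoint (σ j'))
    (M : ℕ → Equiv.Perm ℕ → ℝ)
    (hlim : ∀ j, ∃ L : ℝ,
      Tendsto (fun n : ℕ => (n : ℝ) ^ (((Set.ncard {x | σ j x ≠ x} : ℝ) - 1) / 2) * M n (σ j))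
        atTop (nhds L)) :
    ((∀ s : Finset (Fin r), s.Nonempty →
        Tendsto (fun n : ℕ =>
            (n : ℝ) ^ ((∑ j ∈ s, ((Set.ncard {x | σ j x ≠ x} : ℝ) - 1)) / 2) *
              (M n (((s.sort (· ≤ ·)).map σ).prod) - ∏ j ∈ s, M n (σ j)))
          atTop (nhds 0)) ↔
      (∀ s : Finset (Fin r), 2 ≤ s.card →
        Tendsto (fun n : ℕ =>
            (n : ℝ) ^ ((∑ j ∈ s, ((Set.ncard {x | σ j x ≠ x} : ℝ) - 1)) / 2) *
              permCumulant (M n) fun t : Fin s.card => σ (s.orderIsoOfFin rfl t))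
          atTop (nhds 0))) :=
  stmt12_general r σ M hlim
end

section
/- Let F ∈ ℝ[[X]] be a formal power series and let g : ℕ × ℕ → ℝ. For k ∈ ℕ set A_k := (1 + X²·F)^k ∈ ℝ[[X]]. Suppose that for all k, k′ ∈ ℕ: Σ_{m=0}^{k−1} Σ_{m′=0}^{k′−1} (coefficient of X^m in A_k)·(coefficient of X^{m′} in A_{k′})·g(k−1−m, k′−1−m′) = 0. (This double sum equals the coefficient of z^{−1}w^{−1} in (z^{−1}+zF(z))^{k}(w^{−1}+wF(w))^{k′}·Ext(z,w), where Ext(z,w) = Σ_{i,j≥0} g(i,j) z^i w^j.) Then g(i,j) = 0 for all i, j ∈ ℕ. -/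
open Finset PowerSeries

theorem PowerSeries.coeff_zero_one_add_X_pow_mul_pow {R : Type*} [CommSemiring R]
    (F : PowerSeries R) {n : ℕ} (hn : n ≠ 0) (k : ℕ) :
    coeff 0 ((1 + X ^ n * F) ^ k) = 1 := by
  simp [coeff_zero_eq_constantCoeff, hn]

/-- The system is triangular for the order by `i + j`, with diagonal entries `a i 0 * b j 0 = 1`. -/
theorem eq_zero_of_sum_range_mul_sub_eq_zero {R : Type*} [Semiring R] (a b : ℕ → ℕ → R)
    (ha : ∀ i, a i 0 = 1) (hb : ∀ j, b j 0 = 1) (g : ℕ → ℕ → R)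
    (h : ∀ i j, ∑ m ∈ range (i + 1), ∑ m' ∈ range (j + 1),
      a i m * b j m' * g (i - m) (j - m') = 0) (i j : ℕ) :
    g i j = 0 := by
  induction hn : i + j using Nat.strong_induction_on generalizing i j with
  | _ n ih =>
  have key := h i j
  rw [← sum_product', sum_eq_single (0, 0)] at key
  · simpa [ha, hb] using key
  · rintro ⟨m, m'⟩ hmem hne
    simp only [mem_product, mem_range, ne_eq, Prod.mk.injEq, not_and_or] at hmem hne
    rw [ih (i - m + (j - m')) (by omega) _ _ rfl, mul_zero]
  · simp

/-- Uniqueness lemma: if all the "coefficient extractions"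
`[z⁻¹w⁻¹] (z⁻¹+zF(z))^k (w⁻¹+wF(w))^{k'} Σ_{i,j} g(i,j) zⁱwʲ` vanish, written concretely
as double sums of coefficients of `A_k = (1 + X²F)^k`, then `g ≡ 0`. -/
theorem stmt14 (F : PowerSeries ℝ) (g : ℕ → ℕ → ℝ)
    (h : ∀ k k' : ℕ,
      (∑ m ∈ Finset.range k, ∑ m' ∈ Finset.range k',
        (PowerSeries.coeff m ((1 + PowerSeries.X ^ 2 * F) ^ k)) *
          (PowerSeries.coeff m' ((1 + PowerSeries.X ^ 2 * F) ^ k')) *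
          g (k - 1 - m) (k' - 1 - m')) = 0) :
    ∀ i j : ℕ, g i j = 0 := by
  have hA (k : ℕ) : coeff 0 ((1 + X ^ 2 * F) ^ (k + 1)) = 1 :=
    coeff_zero_one_add_X_pow_mul_pow F two_ne_zero _
  exact eq_zero_of_sum_range_mul_sub_eq_zero
    (fun k m ↦ coeff m ((1 + X ^ 2 * F) ^ (k + 1))) (fun k m ↦ coeff m ((1 + X ^ 2 * F) ^ (k + 1)))
    hA hA g (fun i j ↦ by simpa using h (i + 1) (j + 1))
end
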